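/- arXiv:0705.1773 — 5 statements merged into one kernel-verified Lean document; each statement's English description precedes it below -/
import Mathlib

section
/- Let 0 < α < 1 and a, b > 0, and let x : [0,∞) → [0,∞) be a continuous function such that for every t ≥ 0 one has x(t) ≤ a + b t^α ∫_0^t (t−s)^{−α} s^{−α} x(s) ds. Then for every t ≥ 0, x(t) ≤ a c_α exp(d_α t b^{1/(1−α)}), where c_α = 4e² Γ(1−α)/(1−α) and d_α = 2 (Γ(1−α))^{1/(1−α)}. -/
/-!
Write `β = 1 - α`. By the Beta integral, the operator `f ↦ b t^α ∫₀ᵗ (t - s)^(-α) s^(-α) f(s) ds`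
maps `t^(nβ) / Γ((n+1)β)` to `b Γ(β) t^((n+1)β) / Γ((n+2)β)`. Iterating the inequality `N` times,
starting from a bound `x ≤ M` on `[0, t]`, therefore gives
`x(t) ≤ a Γ(β) ∑_{n<N} E_n(w) + M Γ(β) E_N(w)` with `E_n(w) = w^(nβ) / Γ((n+1)β)` and
`w = (b Γ(β))^(1/β) t`. Since `Γ(y) ≥ e⁻¹ (⌊y⌋ - 1)!`, grouping the `n` with the same
`k = ⌊(n+1)β⌋` (at most `2/β` of them) bounds the partial sums of `∑ E_n(w)` by
`(2/β) e ∑_k max(1,w)^(k+1) / (k-1)! ≤ (4e²/β) e^(2w)`. So the series converges, the remainder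
`M Γ(β) E_N(w)` tends to `0`, and the bound follows.
-/

open MeasureTheory Set Real Filter Finset Nat Topology

theorem integral_rpow_mul_sub_rpow {p q t : ℝ} (hp : 0 < p) (hq : 0 < q) (ht : 0 < t) :
    ∫ u in (0 : ℝ)..t, u ^ (p - 1) * (t - u) ^ (q - 1) =
      t ^ (p + q - 1) * (Gamma p * Gamma q / Gamma (p + q)) := by
  have hGamma : Complex.Gamma ((p : ℂ) + q) = Gamma (p + q) := by
    rw [← Complex.ofReal_add, Complex.Gamma_ofReal]
  have hbeta : Complex.betaIntegral p q = Complex.Gamma p * Complex.Gamma q / Gamma (p + q) := by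
    rw [Complex.Gamma_mul_Gamma_eq_betaIntegral (by simpa using hp) (by simpa using hq), hGamma,
      mul_div_cancel_left₀]
    exact_mod_cast (Gamma_pos_of_pos (add_pos hp hq)).ne'
  apply Complex.ofReal_injective
  rw [← intervalIntegral.integral_ofReal]
  calc _ = ∫ u in (0 : ℝ)..t, (u : ℂ) ^ ((p : ℂ) - 1) * ((t : ℂ) - u) ^ ((q : ℂ) - 1) := by
        refine intervalIntegral.integral_congr fun u hu => ?_
        rw [uIcc_of_le ht.le] at hu
        push_cast [Complex.ofReal_cpow hu.1, Complex.ofReal_cpow (sub_nonneg.2 hu.2)]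
        rfl
    _ = _ := by
        rw [Complex.betaIntegral_scaled _ _ ht, hbeta]
        push_cast [Complex.ofReal_cpow ht.le, Complex.Gamma_ofReal]
        ring_nf

theorem intervalIntegrable_rpow_mul_sub_rpow {p q t : ℝ} (hp : 0 < p) (hq : 0 < q) (ht : 0 < t) :
    IntervalIntegrable (fun u => u ^ (p - 1) * (t - u) ^ (q - 1)) volume 0 t := by
  refine intervalIntegral.intervalIntegrable_of_integral_ne_zero ?_
  rw [integral_rpow_mul_sub_rpow hp hq ht]
  have := Gamma_pos_of_pos hp
  have := Gamma_pos_of_pos hq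
  have := Gamma_pos_of_pos (add_pos hp hq)
  positivity

/-- `∑ n, mlTerm β n t` is the two-parameter Mittag-Leffler function `E_{β,β}(t^β)`. -/
noncomputable def mlTerm (β : ℝ) (n : ℕ) (t : ℝ) : ℝ :=
  t ^ (n * β) / Gamma ((n + 1) * β)

theorem continuous_mlTerm {β : ℝ} (hβ : 0 ≤ β) (n : ℕ) : Continuous (mlTerm β n) :=
  (continuous_rpow_const (by positivity)).div_const _

theorem mlTerm_zero (β t : ℝ) : mlTerm β 0 t = (Gamma β)⁻¹ := by
  simp [mlTerm]

theorem mlTerm_nonneg {β t : ℝ} (hβ : 0 < β) (ht : 0 ≤ t) (n : ℕ) : 0 ≤ mlTerm β n t :=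
  div_nonneg (rpow_nonneg ht _) (Gamma_pos_of_pos (by positivity)).le

theorem pow_mul_mlTerm {β c t : ℝ} (hβ : 0 < β) (hc : 0 ≤ c) (ht : 0 ≤ t) (n : ℕ) :
    c ^ n * mlTerm β n t = mlTerm β n (c ^ (1 / β) * t) := by
  rw [mlTerm, mlTerm, mul_rpow (rpow_nonneg hc _) ht, ← rpow_mul hc,
    show 1 / β * (n * β) = n by field_simp, rpow_natCast, mul_div_assoc]

noncomputable def singularVolterra (α b : ℝ) (f : ℝ → ℝ) (t : ℝ) : ℝ :=
  b * t ^ α * ∫ s in (0 : ℝ)..t, (t - s) ^ (-α) * s ^ (-α) * f s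

section singularVolterra

variable {α b t : ℝ} {f g : ℝ → ℝ}

theorem intervalIntegrable_kernel_mul (hα1 : α < 1) (ht : 0 ≤ t)
    (hf : ContinuousOn f (Icc 0 t)) :
    IntervalIntegrable (fun s => (t - s) ^ (-α) * s ^ (-α) * f s) volume 0 t := by
  rcases ht.eq_or_lt with rfl | ht
  · exact IntervalIntegrable.refl
  have hbeta := intervalIntegrable_rpow_mul_sub_rpow (sub_pos.2 hα1) (sub_pos.2 hα1) ht
  simp only [sub_sub_cancel_left] at hbeta
  refine (hbeta.mul_continuousOn (by rwa [uIcc_of_le ht.le])).congr_ae ?_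
  exact Eventually.of_forall fun s => by ring

theorem singularVolterra_mono (hb : 0 ≤ b) (ht : 0 ≤ t)
    (hf : IntervalIntegrable (fun s => (t - s) ^ (-α) * s ^ (-α) * f s) volume 0 t)
    (hg : IntervalIntegrable (fun s => (t - s) ^ (-α) * s ^ (-α) * g s) volume 0 t)
    (hfg : ∀ s ∈ Icc 0 t, f s ≤ g s) :
    singularVolterra α b f t ≤ singularVolterra α b g t := by
  refine mul_le_mul_of_nonneg_left (intervalIntegral.integral_mono_on ht hf hg fun s hs => ?_)
    (by positivity)
  exact mul_le_mul_of_nonneg_left (hfg s hs)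
    (mul_nonneg (rpow_nonneg (sub_nonneg.2 hs.2) _) (rpow_nonneg hs.1 _))

theorem singularVolterra_const_mul (c : ℝ) :
    singularVolterra α b (fun s => c * f s) t = c * singularVolterra α b f t := by
  simp only [singularVolterra, mul_left_comm _ c, intervalIntegral.integral_const_mul]

theorem singularVolterra_add
    (hf : IntervalIntegrable (fun s => (t - s) ^ (-α) * s ^ (-α) * f s) volume 0 t)
    (hg : IntervalIntegrable (fun s => (t - s) ^ (-α) * s ^ (-α) * g s) volume 0 t) :
    singularVolterra α b (fun s => f s + g s) t =
      singularVolterra α b f t + singularVolterra α b g t := by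
  simp only [singularVolterra, mul_add, intervalIntegral.integral_add hf hg]

theorem singularVolterra_sum {ι : Type*} (S : Finset ι) {F : ι → ℝ → ℝ}
    (hF : ∀ i ∈ S,
      IntervalIntegrable (fun s => (t - s) ^ (-α) * s ^ (-α) * F i s) volume 0 t) :
    singularVolterra α b (fun s => ∑ i ∈ S, F i s) t = ∑ i ∈ S, singularVolterra α b (F i) t := by
  simp only [singularVolterra, Finset.mul_sum, intervalIntegral.integral_finsetSum hF]

theorem singularVolterra_rpow (hα1 : α < 1) {γ : ℝ} (hγ : α < γ + 1)
    (ht : 0 ≤ t) :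
    singularVolterra α b (fun s => s ^ γ) t =
      b * (Gamma (γ + 1 - α) * Gamma (1 - α) / Gamma (γ + 2 - 2 * α)) * t ^ (γ + 1 - α) := by
  rcases ht.eq_or_lt with rfl | ht
  · simp [singularVolterra, zero_rpow (sub_pos.2 hγ).ne']
  have hbeta := integral_rpow_mul_sub_rpow (sub_pos.2 hγ) (sub_pos.2 hα1) ht
  have hkernel : ∫ s in (0 : ℝ)..t, (t - s) ^ (-α) * s ^ (-α) * s ^ γ =
      ∫ s in (0 : ℝ)..t, s ^ (γ + 1 - α - 1) * (t - s) ^ (1 - α - 1) := by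
    rw [intervalIntegral.integral_of_le ht.le, intervalIntegral.integral_of_le ht.le]
    refine setIntegral_congr_fun measurableSet_Ioc fun s hs => ?_
    rw [mul_assoc, ← rpow_add hs.1]
    ring_nf
  have hpow : t ^ α * t ^ (γ + 2 - 2 * α - 1) = t ^ (γ + 1 - α) := by
    rw [← rpow_add ht]
    ring_nf
  rw [singularVolterra, hkernel, hbeta, show γ + 1 - α + (1 - α) = γ + 2 - 2 * α by ring, ← hpow]
  ring

theorem singularVolterra_mlTerm (hα1 : α < 1) (ht : 0 ≤ t) (n : ℕ) :
    singularVolterra α b (mlTerm (1 - α) n) t = b * Gamma (1 - α) * mlTerm (1 - α) (n + 1) t := by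
  have hβ : 0 < 1 - α := sub_pos.2 hα1
  have hmlTerm : mlTerm (1 - α) n = fun s => (Gamma ((n + 1) * (1 - α)))⁻¹ * s ^ (n * (1 - α)) := by
    ext s
    rw [mlTerm, div_eq_inv_mul]
  rw [hmlTerm, singularVolterra_const_mul, singularVolterra_rpow hα1 (by nlinarith) ht, mlTerm]
  have hΓ := (Gamma_pos_of_pos (by positivity : 0 < ((n : ℝ) + 1) * (1 - α))).ne'
  push_cast
  rw [show (n : ℝ) * (1 - α) + 1 - α = (n + 1) * (1 - α) by ring,
    show (n : ℝ) * (1 - α) + 2 - 2 * α = (n + 1 + 1) * (1 - α) by ring]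
  field_simp

/-- The `N`-th iterate of `f ↦ a + singularVolterra α b f`, started at the constant `M`. -/
noncomputable def picardIterate (α a b M : ℝ) (N : ℕ) (t : ℝ) : ℝ :=
  a * Gamma (1 - α) * ∑ n ∈ range N, (b * Gamma (1 - α)) ^ n * mlTerm (1 - α) n t +
    M * Gamma (1 - α) * ((b * Gamma (1 - α)) ^ N * mlTerm (1 - α) N t)

theorem picardIterate_zero (hα1 : α < 1) (a M : ℝ) : picardIterate α a b M 0 t = M := by
  simp [picardIterate, mlTerm_zero, (Gamma_pos_of_pos (sub_pos.2 hα1)).ne']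

theorem continuous_picardIterate (hα1 : α < 1) (a M : ℝ) (N : ℕ) :
    Continuous (picardIterate α a b M N) := by
  have := continuous_mlTerm (sub_pos.2 hα1).le
  unfold picardIterate
  fun_prop

theorem add_singularVolterra_picardIterate (hα1 : α < 1) (ht : 0 ≤ t) (a M : ℝ) (N : ℕ) :
    a + singularVolterra α b (picardIterate α a b M N) t = picardIterate α a b M (N + 1) t := by
  have hK : ∀ f : ℝ → ℝ, Continuous f →
      IntervalIntegrable (fun s => (t - s) ^ (-α) * s ^ (-α) * f s) volume 0 t :=
    fun f hf => intervalIntegrable_kernel_mul hα1 ht hf.continuousOn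
  have := continuous_mlTerm (sub_pos.2 hα1).le
  unfold picardIterate
  rw [singularVolterra_add (hK _ (by fun_prop)) (hK _ (by fun_prop)),
    singularVolterra_const_mul, singularVolterra_sum _ fun n _ => hK _ (by fun_prop)]
  have hstep : ∀ n, (b * Gamma (1 - α)) ^ n * (b * Gamma (1 - α) * mlTerm (1 - α) (n + 1) t) =
      (b * Gamma (1 - α)) ^ (n + 1) * mlTerm (1 - α) (n + 1) t := fun n => by ring
  simp only [singularVolterra_const_mul, singularVolterra_mlTerm hα1 ht, hstep]
  rw [sum_range_succ' _ N, pow_zero, one_mul, mlTerm_zero, mul_add (a * Gamma (1 - α)),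
    mul_inv_cancel_right₀ (Gamma_pos_of_pos (sub_pos.2 hα1)).ne']
  ring

theorem le_picardIterate {a M T : ℝ} {x : ℝ → ℝ} (hα1 : α < 1) (hb : 0 ≤ b)
    (hx : ContinuousOn x (Icc 0 T)) (hxM : ∀ t ∈ Icc 0 T, x t ≤ M)
    (hineq : ∀ t ∈ Icc 0 T, x t ≤ a + singularVolterra α b x t) (N : ℕ) :
    ∀ t ∈ Icc 0 T, x t ≤ picardIterate α a b M N t := by
  induction N with
  | zero => simpa only [picardIterate_zero hα1] using hxM
  | succ N ih =>
    intro t ht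
    have hsub : Icc 0 t ⊆ Icc 0 T := Icc_subset_Icc_right ht.2
    rw [← add_singularVolterra_picardIterate hα1 ht.1]
    refine (hineq t ht).trans (add_le_add_right (singularVolterra_mono hb ht.1 ?_ ?_
      fun s hs => ih s (hsub hs)) a)
    · exact intervalIntegrable_kernel_mul hα1 ht.1 (hx.mono hsub)
    · exact intervalIntegrable_kernel_mul hα1 ht.1 (continuous_picardIterate hα1 a M N).continuousOn

end singularVolterra

namespace Real

theorem exp_neg_one_le_Gamma_of_one_le {y : ℝ} (hy : 1 ≤ y) : exp (-1) ≤ Gamma y := by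
  have hint : IntegrableOn (fun x => exp (-x) * x ^ (y - 1)) (Ioi 0) :=
    GammaIntegral_convergent (by linarith)
  rw [Gamma_eq_integral (by linarith), ← integral_exp_neg_Ioi 1]
  calc ∫ x in Ioi 1, exp (-x)
      ≤ ∫ x in Ioi 1, exp (-x) * x ^ (y - 1) := by
        refine setIntegral_mono_on (by simpa using exp_neg_integrableOn_Ioi 1 one_pos)
          (hint.mono_set (Set.Ioi_subset_Ioi zero_le_one)) measurableSet_Ioi fun x hx => ?_
        exact le_mul_of_one_le_right (exp_nonneg _) (one_le_rpow (le_of_lt hx) (by linarith))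
    _ ≤ ∫ x in Ioi 0, exp (-x) * x ^ (y - 1) := by
        refine setIntegral_mono_set hint ?_ (Set.Ioi_subset_Ioi zero_le_one).eventuallyLE
        filter_upwards [self_mem_ae_restrict measurableSet_Ioi] with x hx
        exact mul_nonneg (exp_nonneg _) (rpow_nonneg (le_of_lt hx) _)

theorem exp_neg_one_le_Gamma {y : ℝ} (hy : 0 < y) : exp (-1) ≤ Gamma y := by
  rcases le_or_gt 1 y with h | h
  · exact exp_neg_one_le_Gamma_of_one_le h
  · have hrec := Gamma_add_one hy.ne'
    have := exp_neg_one_le_Gamma_of_one_le (by linarith : 1 ≤ y + 1)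
    nlinarith [Gamma_pos_of_pos hy]

theorem exp_neg_one_mul_factorial_le_Gamma {y : ℝ} (hy : 0 < y) :
    exp (-1) * (⌊y⌋₊ - 1)! ≤ Gamma y := by
  rcases lt_or_ge y 2 with h | h
  · have : ⌊y⌋₊ - 1 = 0 := by
      have : ⌊y⌋₊ < 2 := (Nat.floor_lt hy.le).2 (by exact_mod_cast h)
      omega
    simpa [this] using exp_neg_one_le_Gamma hy
  · have h2 : 2 ≤ ⌊y⌋₊ := Nat.le_floor (by exact_mod_cast h)
    have hm : ((⌊y⌋₊ - 1 : ℕ) : ℝ) + 1 = ⌊y⌋₊ := by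
      rw [Nat.cast_sub (by omega)]
      ring
    calc exp (-1) * (⌊y⌋₊ - 1)! ≤ (⌊y⌋₊ - 1)! :=
          mul_le_of_le_one_left (by positivity) (exp_le_one_iff.2 (by norm_num))
      _ = Gamma ⌊y⌋₊ := by rw [← hm, Gamma_nat_eq_factorial]
      _ ≤ Gamma y := Gamma_strictMonoOn_Ici.monotoneOn (by simp; exact_mod_cast h2) h
          (Nat.floor_le hy.le)

theorem sq_mul_exp_le {w : ℝ} (hw : 0 ≤ w) : w ^ 2 * exp w ≤ exp 1 * exp (2 * w) := by
  have h3 := pow_div_factorial_le_exp (w + 1) (by linarith) 3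
  have hcube : w ^ 2 ≤ (w + 1) ^ 3 / 3! := by
    norm_num [Nat.factorial]
    nlinarith [mul_nonneg hw (sq_nonneg (w - 3 / 2))]
  calc w ^ 2 * exp w ≤ exp (w + 1) * exp w := by gcongr; exact hcube.trans h3
    _ = exp 1 * exp (2 * w) := by rw [← exp_add, ← exp_add]; ring_nf

end Real

theorem mlTerm_le {β w : ℝ} (hβ : 0 < β) (hw : 0 ≤ w) (n : ℕ) :
    mlTerm β n w ≤ exp 1 * max 1 w ^ (⌊(n + 1) * β⌋₊ + 1) / (⌊(n + 1) * β⌋₊ - 1)! := by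
  have hy : 0 < (n + 1) * β := by positivity
  have hpow : w ^ (n * β) ≤ max 1 w ^ (⌊(n + 1) * β⌋₊ + 1) := by
    calc w ^ (n * β) ≤ max 1 w ^ (n * β) := by gcongr; exact le_max_right _ _
      _ ≤ max 1 w ^ ((⌊(n + 1) * β⌋₊ + 1 : ℕ) : ℝ) := by
        refine rpow_le_rpow_of_exponent_le (le_max_left _ _) ?_
        push_cast
        nlinarith [Nat.lt_floor_add_one ((n + 1) * β)]
      _ = _ := rpow_natCast _ _
  calc mlTerm β n w ≤ max 1 w ^ (⌊(n + 1) * β⌋₊ + 1) / (exp (-1) * (⌊(n + 1) * β⌋₊ - 1)!) :=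
        div_le_div₀ (by positivity) hpow (by positivity) (exp_neg_one_mul_factorial_le_Gamma hy)
    _ = _ := by rw [exp_neg]; field_simp

theorem card_filter_floor_mul_eq_le {s : ℝ} (hs : 0 < s) (S : Finset ℕ) (k : ℕ) :
    #(S.filter fun n : ℕ => ⌊((n : ℝ) + 1) * s⌋₊ = k) ≤ ⌊1 / s⌋₊ + 1 := by
  set F := S.filter fun n : ℕ => ⌊((n : ℝ) + 1) * s⌋₊ = k
  rcases F.eq_empty_or_nonempty with hF | hF
  · simp [F, hF]
  have hfloor : ∀ n ∈ F, (k : ℝ) ≤ ((n : ℝ) + 1) * s ∧ ((n : ℝ) + 1) * s < k + 1 := fun n hn => by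
    rw [← (mem_filter.1 hn).2]
    exact ⟨Nat.floor_le (by positivity), Nat.lt_floor_add_one _⟩
  have hsub : F ⊆ Finset.Icc (F.min' hF) (F.min' hF + ⌊1 / s⌋₊) := fun n hn => by
    have hmin := F.min'_le n hn
    have h₀ := hfloor _ (F.min'_mem hF)
    have h₁ := hfloor n hn
    have : ((n - F.min' hF : ℕ) : ℝ) ≤ 1 / s := by
      rw [Nat.cast_sub hmin, le_div_iff₀ hs]
      nlinarith
    have := Nat.le_floor this
    rw [Finset.mem_Icc]
    omega
  have := Finset.card_le_card hsub
  rw [Nat.card_Icc] at this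
  omega

theorem sum_range_pow_succ_div_factorial_pred_le {v : ℝ} (hv : 0 ≤ v) (N : ℕ) :
    ∑ k ∈ range (N + 1), v ^ (k + 1) / (k - 1)! ≤ v + v ^ 2 * exp v := by
  -- `k - 1` is truncated, so the `k = 0` term is `v`.
  rw [sum_range_succ']
  have htail : ∑ k ∈ range N, v ^ (k + 1 + 1) / (k + 1 - 1)! =
      v ^ 2 * ∑ k ∈ range N, v ^ k / k ! := by
    rw [mul_sum]
    exact sum_congr rfl fun k _ => by rw [Nat.add_sub_cancel]; ring
  rw [htail]
  have := sum_le_exp_of_nonneg hv N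
  simp only [zero_add, pow_one, Nat.zero_sub, Nat.factorial_zero, Nat.cast_one, div_one]
  nlinarith [sq_nonneg v]

theorem max_one_add_sq_mul_exp_le {w : ℝ} (hw : 0 ≤ w) :
    max 1 w + max 1 w ^ 2 * exp (max 1 w) ≤ 2 * exp 1 * exp (2 * w) := by
  have h1 : 1 ≤ exp 1 := one_le_exp zero_le_one
  have h2w : 1 ≤ exp (2 * w) := one_le_exp (by positivity)
  rcases le_total w 1 with h | h
  · rw [max_eq_left h]
    nlinarith
  · rw [max_eq_right h]
    have := sq_mul_exp_le hw
    nlinarith [one_le_exp hw]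

theorem sum_mlTerm_le {β w : ℝ} (hβ0 : 0 < β) (hβ1 : β ≤ 1) (hw : 0 ≤ w) (N : ℕ) :
    ∑ n ∈ range N, mlTerm β n w ≤ 4 * exp 2 / β * exp (2 * w) := by
  set g : ℕ → ℝ := fun k => exp 1 * max 1 w ^ (k + 1) / (k - 1)!
  set κ : ℕ → ℕ := fun n => ⌊(n + 1) * β⌋₊
  have hmaps : ∀ n ∈ range N, κ n ∈ range (N + 1) := fun n hn => by
    rw [Finset.mem_range] at hn ⊢
    have : κ n ≤ n + 1 := Nat.floor_le_of_le (by push_cast; nlinarith)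
    omega
  have hcard : ∀ k, (#{n ∈ range N | κ n = k} : ℝ) ≤ 2 / β := fun k => by
    have hβinv : 1 ≤ 1 / β := by rwa [le_div_iff₀ hβ0, one_mul]
    calc (#{n ∈ range N | κ n = k} : ℝ) ≤ ((⌊1 / β⌋₊ + 1 : ℕ) : ℝ) :=
          Nat.cast_le.2 (card_filter_floor_mul_eq_le hβ0 _ k)
      _ ≤ 1 / β + 1 / β := by push_cast; gcongr; exact Nat.floor_le (by positivity)
      _ = 2 / β := by ring
  calc ∑ n ∈ range N, mlTerm β n w ≤ ∑ n ∈ range N, g (κ n) :=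
        sum_le_sum fun n _ => mlTerm_le hβ0 hw n
    _ = ∑ k ∈ range (N + 1), #{n ∈ range N | κ n = k} * g k := by
        rw [← sum_fiberwise_of_maps_to' hmaps]
        simp
    _ ≤ ∑ k ∈ range (N + 1), 2 / β * g k := by
        gcongr with k
        exact hcard k
    _ = 2 / β * exp 1 * ∑ k ∈ range (N + 1), max 1 w ^ (k + 1) / (k - 1)! := by
        simp only [g, mul_sum, mul_div_assoc, mul_assoc]
    _ ≤ 2 / β * exp 1 * (2 * exp 1 * exp (2 * w)) := by
        gcongr
        exact (sum_range_pow_succ_div_factorial_pred_le (by positivity) N).trans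
          (max_one_add_sq_mul_exp_le hw)
    _ = 4 * exp 2 / β * exp (2 * w) := by
        rw [show (2 : ℝ) = 1 + 1 by norm_num, exp_add]
        ring

theorem le_of_forall_le_sum_mlTerm_add {β w A B y : ℝ} (hβ0 : 0 < β) (hβ1 : β ≤ 1) (hw : 0 ≤ w)
    (hA : 0 ≤ A) (h : ∀ N, y ≤ A * ∑ n ∈ range N, mlTerm β n w + B * mlTerm β N w) :
    y ≤ A * (4 * exp 2 / β * exp (2 * w)) := by
  have hsummable : Summable fun n => mlTerm β n w :=
    summable_of_sum_range_le (fun n => mlTerm_nonneg hβ0 hw n) (sum_mlTerm_le hβ0 hβ1 hw)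
  have hlim : Tendsto (fun N => A * (4 * exp 2 / β * exp (2 * w)) + B * mlTerm β N w) atTop
      (𝓝 (A * (4 * exp 2 / β * exp (2 * w)))) := by
    simpa using tendsto_const_nhds.add (hsummable.tendsto_atTop_zero.const_mul B)
  refine ge_of_tendsto hlim (Eventually.of_forall fun N => (h N).trans ?_)
  gcongr
  exact sum_mlTerm_le hβ0 hβ1 hw N

theorem stmt_0_general (α a b : ℝ) (hα0 : 0 < α) (hα1 : α < 1) (ha : 0 < a) (hb : 0 < b)
    (x : ℝ → ℝ) (hcont : ContinuousOn x (Set.Ici 0))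
    (hineq : ∀ t, 0 ≤ t →
      x t ≤ a + b * t ^ α * ∫ s in (0:ℝ)..t, (t - s) ^ (-α) * s ^ (-α) * x s) :
    ∀ t, 0 ≤ t →
      x t ≤ a * (4 * Real.exp 2 * Real.Gamma (1 - α) / (1 - α)) *
        Real.exp (2 * Real.Gamma (1 - α) ^ (1 / (1 - α)) * t * b ^ (1 / (1 - α))) := by
  intro t ht
  have hβ : 0 < 1 - α := sub_pos.2 hα1
  have hΓ := Gamma_pos_of_pos hβ
  have hx : ContinuousOn x (Icc 0 t) := hcont.mono Icc_subset_Ici_self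
  obtain ⟨M, hM⟩ := isCompact_Icc.exists_bound_of_continuousOn hx
  have hiter := le_picardIterate hα1 hb.le hx
    (fun u hu => (le_abs_self _).trans (hM u hu)) (fun u hu => hineq u hu.1)
  have hbound := le_of_forall_le_sum_mlTerm_add hβ (by linarith)
    (by positivity : 0 ≤ (b * Gamma (1 - α)) ^ (1 / (1 - α)) * t)
    (by positivity : 0 ≤ a * Gamma (1 - α)) (B := M * Gamma (1 - α)) (y := x t) fun N => by
      simpa only [picardIterate, pow_mul_mlTerm (c := b * Gamma (1 - α)) hβ (by positivity) ht]
        using hiter N t ⟨ht, le_rfl⟩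
  rw [mul_rpow hb.le hΓ.le] at hbound
  convert hbound using 1
  ring_nf

/-- Proposition 1 (Lemma 7.6 of Nualart–Răşcanu): a Gronwall-type estimate with a
weakly singular kernel. -/
theorem stmt_0 (α a b : ℝ) (hα0 : 0 < α) (hα1 : α < 1) (ha : 0 < a) (hb : 0 < b)
    (x : ℝ → ℝ) (hcont : ContinuousOn x (Set.Ici 0)) (hnonneg : ∀ t, 0 ≤ t → 0 ≤ x t)
    (hineq : ∀ t, 0 ≤ t →
      x t ≤ a + b * t ^ α * ∫ s in (0:ℝ)..t, (t - s) ^ (-α) * s ^ (-α) * x s) :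
    ∀ t, 0 ≤ t →
      x t ≤ a * (4 * Real.exp 2 * Real.Gamma (1 - α) / (1 - α)) *
        Real.exp (2 * Real.Gamma (1 - α) ^ (1 / (1 - α)) * t * b ^ (1 / (1 - α))) :=
  stmt_0_general α a b hα0 hα1 ha hb x hcont hineq
end

section
/- Let 0 < α < 1 and T > 0. There exists a constant C = C(α,T) > 0 such that for every positive integer N with δ = T/N ≤ 1 and every s ∈ (0,T] that is not a grid point (i.e., s ≠ t_s), one has ∫_0^{t_s} (s−u)^{−α−1} ( ∫_u^{t_s} (v−t_v)^{−α} dv ) du ≤ C δ^{−α}. -/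
/-!
The inner integral of the sawtooth singularity `(v - t_v)^(-α)` up to a grid point `b` is at most
`3/(1-α) · δ^(-α) · (b - u)`: far from `b` count cells, each contributing `δ^(1-α)/(1-α)`; within
half a cell of `b` the integrand is at most `(δ/2)^(-α)`. Since `b < s`, the factor `b - u`
absorbs one power of `(s - u)^(-α-1)`, leaving `∫_0^b (s-u)^(-α) du ≤ T^(1-α)/(1-α)`.
-/

noncomputable def tgrid (δ u : ℝ) : ℝ := δ * (⌊u / δ⌋ : ℤ)

open MeasureTheory intervalIntegral Set

theorem intervalIntegral.integral_mono_on_Ioc_of_nonneg {f g : ℝ → ℝ} {a b : ℝ} (hab : a ≤ b)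
    (hg : IntervalIntegrable g volume a b) (hf : ∀ x ∈ Ioc a b, 0 ≤ f x)
    (hfg : ∀ x ∈ Ioc a b, f x ≤ g x) :
    ∫ x in a..b, f x ≤ ∫ x in a..b, g x := by
  rw [integral_of_le hab, integral_of_le hab]
  exact integral_mono_of_nonneg (ae_restrict_of_forall_mem measurableSet_Ioc hf) hg.1
    (ae_restrict_of_forall_mem measurableSet_Ioc hfg)

theorem rpow_neg_sub_one_mul_le {α x y : ℝ} (hx : 0 ≤ x) (hxy : x ≤ y) :
    y ^ (-α - 1) * x ≤ y ^ (-α) := by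
  rcases (hx.trans hxy).eq_or_lt with rfl | hy
  · rw [le_antisymm hxy hx, mul_zero]
    exact Real.rpow_nonneg le_rfl _
  · calc y ^ (-α - 1) * x ≤ y ^ (-α - 1) * y := by gcongr
      _ = y ^ (-α) := by rw [Real.rpow_sub_one hy.ne', div_mul_cancel₀ _ hy.ne']

section rpow

variable {α : ℝ} (hα : α < 1)
include hα

theorem intervalIntegrable_sub_rpow (c a b : ℝ) :
    IntervalIntegrable (fun u => (u - c) ^ (-α)) volume a b := by
  simpa using (intervalIntegrable_rpow' (a := a - c) (b := b - c) (r := -α)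
    (by linarith)).comp_sub_right c

theorem intervalIntegrable_rpow_sub (s a b : ℝ) :
    IntervalIntegrable (fun u => (s - u) ^ (-α)) volume a b := by
  simpa using (intervalIntegrable_rpow' (a := s - a) (b := s - b) (r := -α)
    (by linarith)).comp_sub_left s

theorem integral_rpow_sub_le {s c : ℝ} (hcs : c ≤ s) :
    ∫ u in (0 : ℝ)..c, (s - u) ^ (-α) ≤ s ^ (1 - α) / (1 - α) := by
  rw [integral_comp_sub_left (fun x => x ^ (-α)), sub_zero,
    integral_rpow (Or.inl (by linarith)), show -α + 1 = 1 - α by ring]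
  exact div_le_div_of_nonneg_right (sub_le_self _ (Real.rpow_nonneg (by linarith) _))
    (by linarith)

end rpow

theorem rpow_neg_div_two_le {α δ : ℝ} (hδ : 0 ≤ δ) (hα : α ≤ 1) :
    (δ / 2) ^ (-α) ≤ 2 * δ ^ (-α) := by
  rw [Real.div_rpow hδ zero_le_two, Real.rpow_neg zero_le_two, div_inv_eq_mul, mul_comm]
  gcongr
  calc (2 : ℝ) ^ α ≤ 2 ^ (1 : ℝ) := Real.rpow_le_rpow_of_exponent_le one_le_two hα
    _ = 2 := Real.rpow_one 2

section tgrid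

variable {δ : ℝ} (hδ : 0 < δ)
include hδ

theorem tgrid_le (u : ℝ) : tgrid δ u ≤ u := by
  have := mul_le_mul_of_nonneg_left (Int.floor_le (u / δ)) hδ.le
  rwa [mul_div_cancel₀ _ hδ.ne'] at this

theorem sub_lt_tgrid (u : ℝ) : u - δ < tgrid δ u := by
  have := mul_lt_mul_of_pos_left (Int.lt_floor_add_one (u / δ)) hδ
  rw [mul_add, mul_div_cancel₀ _ hδ.ne', mul_one] at this
  unfold tgrid
  linarith

theorem tgrid_eq_of_mem_Ico {j : ℤ} {v : ℝ} (h₁ : δ * j ≤ v) (h₂ : v < δ * (j + 1)) :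
    tgrid δ v = δ * j := by
  rw [tgrid, Int.floor_eq_iff.2 ⟨(le_div_iff₀' hδ).2 h₁, (div_lt_iff₀' hδ).2 h₂⟩]

end tgrid

section sawtooth

variable {α δ : ℝ}

theorem measurable_sawtooth : Measurable fun v => (v - tgrid δ v) ^ (-α) := by
  unfold tgrid; fun_prop

theorem sawtooth_le_of_mem_cell (hδ : 0 < δ) {j : ℤ} {v : ℝ} (h₁ : δ * j ≤ v)
    (h₂ : v ≤ δ * (j + 1)) : (v - tgrid δ v) ^ (-α) ≤ (v - δ * j) ^ (-α) := by
  rcases h₂.lt_or_eq with h₂ | rfl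
  · rw [tgrid_eq_of_mem_Ico hδ h₁ h₂]
  · have : tgrid δ (δ * (j + 1)) = δ * (j + 1) := by
      exact_mod_cast tgrid_eq_of_mem_Ico hδ (j := j + 1) (by push_cast; rfl)
        (by push_cast; nlinarith)
    rw [this, sub_self, mul_add, mul_one, add_sub_cancel_left]
    rcases eq_or_ne α 0 with rfl | hα
    · simp
    · rw [Real.zero_rpow (neg_ne_zero.2 hα)]
      exact Real.rpow_nonneg hδ.le _

variable (hδ : 0 < δ) (hα : α < 1)
include hδ hα

theorem intervalIntegrable_sawtooth_cell (j : ℤ) :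
    IntervalIntegrable (fun v => (v - tgrid δ v) ^ (-α)) volume (δ * j) (δ * (j + 1)) := by
  have hj : δ * j ≤ δ * (j + 1) := by nlinarith
  refine (intervalIntegrable_sub_rpow hα (δ * j) _ _).mono_fun'
    measurable_sawtooth.aestronglyMeasurable ?_
  rw [uIoc_of_le hj]
  refine ae_restrict_of_forall_mem measurableSet_Ioc fun v hv => ?_
  dsimp only
  rw [Real.norm_of_nonneg (Real.rpow_nonneg (sub_nonneg.2 (tgrid_le hδ v)) _)]
  exact sawtooth_le_of_mem_cell hδ hv.1.le hv.2

theorem integral_sawtooth_cell_le (j : ℤ) :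
    ∫ v in (δ * j)..(δ * (j + 1)), (v - tgrid δ v) ^ (-α) ≤ δ * δ ^ (-α) / (1 - α) := by
  have hj : δ * j ≤ δ * (j + 1) := by nlinarith
  calc ∫ v in (δ * j)..(δ * (j + 1)), (v - tgrid δ v) ^ (-α)
      ≤ ∫ v in (δ * j)..(δ * (j + 1)), (v - δ * j) ^ (-α) :=
        integral_mono_on hj (intervalIntegrable_sawtooth_cell hδ hα j)
          (intervalIntegrable_sub_rpow hα _ _ _) fun v hv => sawtooth_le_of_mem_cell hδ hv.1 hv.2
    _ = δ * δ ^ (-α) / (1 - α) := by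
      rw [integral_comp_sub_right (fun x => x ^ (-α)), sub_self, mul_add, mul_one,
        add_sub_cancel_left, integral_rpow (Or.inl (by linarith)),
        Real.zero_rpow (by linarith), sub_zero, Real.rpow_add hδ, Real.rpow_one]
      ring

theorem intervalIntegrable_sawtooth_grid {k n : ℤ} (hkn : k ≤ n) :
    IntervalIntegrable (fun v => (v - tgrid δ v) ^ (-α)) volume (δ * k) (δ * n) := by
  induction n, hkn using Int.leInduction with
  | base => exact .refl
  | succ n _ ih =>
    push_cast
    exact ih.trans (intervalIntegrable_sawtooth_cell hδ hα n)

theorem integral_sawtooth_grid_le {k n : ℤ} (hkn : k ≤ n) :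
    ∫ v in (δ * k)..(δ * n), (v - tgrid δ v) ^ (-α) ≤ (δ * n - δ * k) * δ ^ (-α) / (1 - α) := by
  induction n, hkn using Int.leInduction with
  | base => simp
  | succ n hkn ih =>
    push_cast
    rw [← integral_add_adjacent_intervals (intervalIntegrable_sawtooth_grid hδ hα hkn)
      (intervalIntegrable_sawtooth_cell hδ hα n)]
    calc _ ≤ (δ * n - δ * k) * δ ^ (-α) / (1 - α) + δ * δ ^ (-α) / (1 - α) :=
          add_le_add ih (integral_sawtooth_cell_le hδ hα n)
      _ = _ := by ring

theorem integral_sawtooth_le_of_le {n : ℤ} {u : ℝ} (hu : u ≤ δ * n) :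
    ∫ v in u..(δ * n), (v - tgrid δ v) ^ (-α) ≤ (δ * n - u + δ) * δ ^ (-α) / (1 - α) := by
  have hk : tgrid δ u = δ * ⌊u / δ⌋ := rfl
  have hkn : ⌊u / δ⌋ ≤ n := by
    exact_mod_cast le_of_mul_le_mul_left (hk ▸ (tgrid_le hδ u).trans hu) hδ
  have h1α : 0 < 1 - α := by linarith
  calc ∫ v in u..(δ * n), (v - tgrid δ v) ^ (-α)
      ≤ ∫ v in (δ * ⌊u / δ⌋)..(δ * n), (v - tgrid δ v) ^ (-α) :=
        integral_mono_interval (hk ▸ tgrid_le hδ u) hu le_rfl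
          (ae_of_all _ fun v => Real.rpow_nonneg (sub_nonneg.2 (tgrid_le hδ v)) _)
          (intervalIntegrable_sawtooth_grid hδ hα hkn)
    _ ≤ (δ * n - δ * ⌊u / δ⌋) * δ ^ (-α) / (1 - α) := integral_sawtooth_grid_le hδ hα hkn
    _ ≤ (δ * n - u + δ) * δ ^ (-α) / (1 - α) := by
      gcongr
      linarith [hk ▸ sub_lt_tgrid hδ u]

theorem integral_sawtooth_le_of_half_cell (hα₀ : 0 ≤ α) {n : ℤ} {u : ℝ}
    (hu₁ : δ * n - δ / 2 ≤ u) (hu₂ : u ≤ δ * n) :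
    ∫ v in u..(δ * n), (v - tgrid δ v) ^ (-α) ≤ (δ * n - u) * (δ / 2) ^ (-α) := by
  have hcell : δ * n = δ * ((n - 1 : ℤ) + 1) := by push_cast; ring
  have hsub : uIcc u (δ * n) ⊆ uIcc (δ * (n - 1 : ℤ)) (δ * ((n - 1 : ℤ) + 1)) := by
    rw [← hcell, uIcc_of_le hu₂, uIcc_of_le (by push_cast; linarith)]
    exact Icc_subset_Icc (by push_cast; linarith) le_rfl
  calc ∫ v in u..(δ * n), (v - tgrid δ v) ^ (-α)
      ≤ ∫ _ in u..(δ * n), (δ / 2) ^ (-α) := by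
        refine integral_mono_on hu₂ ((intervalIntegrable_sawtooth_cell hδ hα _).mono_set hsub)
          intervalIntegrable_const fun v hv => ?_
        refine (sawtooth_le_of_mem_cell hδ (j := n - 1) ?_ (hcell ▸ hv.2)).trans ?_
        · push_cast; linarith [hv.1]
        · exact Real.rpow_le_rpow_of_nonpos (by linarith) (by push_cast; linarith [hv.1])
            (by linarith)
    _ = (δ * n - u) * (δ / 2) ^ (-α) := by simp

theorem integral_sawtooth_le (hα₀ : 0 ≤ α) {n : ℤ} {u : ℝ} (hu : u ≤ δ * n) :
    ∫ v in u..(δ * n), (v - tgrid δ v) ^ (-α) ≤ 3 / (1 - α) * δ ^ (-α) * (δ * n - u) := by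
  have h1α : 0 < 1 - α := by linarith
  rcases le_total u (δ * n - δ / 2) with hu' | hu'
  · calc _ ≤ (δ * n - u + δ) * δ ^ (-α) / (1 - α) := integral_sawtooth_le_of_le hδ hα hu
      _ ≤ 3 * (δ * n - u) * δ ^ (-α) / (1 - α) := by gcongr; linarith
      _ = _ := by ring
  · have h2 : 2 ≤ 3 / (1 - α) := by rw [le_div_iff₀ h1α]; linarith
    calc _ ≤ (δ * n - u) * (δ / 2) ^ (-α) :=
          integral_sawtooth_le_of_half_cell hδ hα hα₀ hu' hu
      _ ≤ (δ * n - u) * (2 * δ ^ (-α)) :=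
          mul_le_mul_of_nonneg_left (rpow_neg_div_two_le hδ.le hα.le) (by linarith)
      _ ≤ 3 / (1 - α) * δ ^ (-α) * (δ * n - u) := by
          rw [mul_comm]
          exact mul_le_mul_of_nonneg_right
            (mul_le_mul_of_nonneg_right h2 (Real.rpow_nonneg hδ.le _)) (by linarith)

end sawtooth

/-- Lemma 1: for `0 < α < 1` there is `C = C(α,T)` such that for every partition with
mesh `δ = T/N ≤ 1` and every non-grid point `s ∈ (0,T]`,
`∫_0^{t_s} (s−u)^{−α−1} ∫_u^{t_s} (v−t_v)^{−α} dv du ≤ C δ^{−α}`. -/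
theorem stmt_1 (α T : ℝ) (hα0 : 0 < α) (hα1 : α < 1) (hT : 0 < T) :
    ∃ C : ℝ, 0 < C ∧ ∀ N : ℕ, 0 < N → T / N ≤ 1 →
      ∀ s ∈ Set.Ioc (0:ℝ) T, s ≠ tgrid (T / N) s →
        (∫ u in (0:ℝ)..tgrid (T / N) s,
            (s - u) ^ (-α - 1) * ∫ v in u..tgrid (T / N) s, (v - tgrid (T / N) v) ^ (-α))
          ≤ C * (T / N) ^ (-α) := by
  have h1α : 0 < 1 - α := by linarith
  refine ⟨3 / (1 - α) * T ^ (1 - α) / (1 - α), by positivity, fun N hN _ s hs hsne => ?_⟩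
  set δ := T / N
  have hδ : 0 < δ := by positivity
  have hb : tgrid δ s = δ * ⌊s / δ⌋ := rfl
  have hb0 : 0 ≤ δ * ⌊s / δ⌋ :=
    mul_nonneg hδ.le (Int.cast_nonneg (Int.floor_nonneg.2 (div_nonneg hs.1.le hδ.le)))
  have hbs : δ * ⌊s / δ⌋ < s := hb ▸ (tgrid_le hδ s).lt_of_ne hsne.symm
  set K := 3 / (1 - α) * δ ^ (-α)
  rw [hb]
  calc _ ≤ ∫ u in (0 : ℝ)..δ * ⌊s / δ⌋, K * (s - u) ^ (-α) := by
        refine integral_mono_on_Ioc_of_nonneg hb0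
          ((intervalIntegrable_rpow_sub hα1 s _ _).const_mul K) (fun u hu => ?_) fun u hu => ?_
        · exact mul_nonneg (Real.rpow_nonneg (by linarith [hu.2]) _) (integral_nonneg hu.2
            fun v _ => Real.rpow_nonneg (sub_nonneg.2 (tgrid_le hδ v)) _)
        · calc _ ≤ (s - u) ^ (-α - 1) * (K * (δ * ⌊s / δ⌋ - u)) :=
                mul_le_mul_of_nonneg_left (integral_sawtooth_le hδ hα1 hα0.le hu.2)
                  (Real.rpow_nonneg (by linarith [hu.2]) _)
            _ = K * ((s - u) ^ (-α - 1) * (δ * ⌊s / δ⌋ - u)) := by ring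
            _ ≤ K * (s - u) ^ (-α) := by
                gcongr
                exact rpow_neg_sub_one_mul_le (by linarith [hu.2]) (by linarith)
    _ = K * ∫ u in (0 : ℝ)..δ * ⌊s / δ⌋, (s - u) ^ (-α) := integral_const_mul _ _
    _ ≤ K * (T ^ (1 - α) / (1 - α)) := by
        gcongr
        exact (integral_rpow_sub_le hα1 hbs.le).trans (by gcongr; exacts [hs.1.le, hs.2])
    _ = _ := by ring
end

section
/- (Pathwise form of Theorem 1(ii).) Fix T > 0, integers d,m ≥ 1, λ ∈ (1/2,1), K > 0, M > 0, β ∈ (1−λ,1], and X₀ ∈ ℝ^d. Let B : [0,T] → ℝ^m satisfy |B(u)−B(v)| ≤ K|u−v|^λ for all u,v ∈ [0,T], and assume the coefficients b and σ are bounded by M and satisfy |σ(t,x)−σ(t,y)| ≤ M|x−y| for all x,y ∈ ℝ^d, t ∈ [0,T], and |σ(t,x)−σ(s,x)| ≤ M|t−s|^β for all x ∈ ℝ^d, s,t ∈ [0,T]. Then for every µ ∈ (1/2,λ) there exists a constant C > 0, depending only on T, d, m, λ, K, M, β, µ and |X₀| (and not on N), such that for every positive integer N with δ = T/N ≤ 1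 the continuously interpolated Euler approximation Y^δ satisfies sup_{t∈[0,T]} |Y^δ(t)| ≤ C and |Y^δ(s) − Y^δ(r)| ≤ C (s−r)^µ for all 0 ≤ r < s ≤ T. -/
/-- `ℓ¹`-type norm of a vector: the sum of absolute values of its entries. -/
def vnorm {n : ℕ} (y : Fin n → ℝ) : ℝ := ∑ i, |y i|

/-- Norm of a `d × m` matrix: the sum of absolute values of its entries. -/
def mnorm {d m : ℕ} (A : Fin d → Fin m → ℝ) : ℝ := ∑ i, ∑ j, |A i j|

/-- Values of the Euler scheme at the grid points `τ_n = nδ`: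
`Y(τ_{n+1}) = Y(τ_n) + b(τ_n, Y(τ_n)) δ + σ(τ_n, Y(τ_n)) (B(τ_{n+1}) − B(τ_n))`. -/
noncomputable def eulerGrid {d m : ℕ} (δ : ℝ)
    (b : ℝ → (Fin d → ℝ) → Fin d → ℝ)
    (σ : ℝ → (Fin d → ℝ) → Fin d → Fin m → ℝ)
    (B : ℝ → Fin m → ℝ) (X0 : Fin d → ℝ) : ℕ → Fin d → ℝ
  | 0 => X0
  | n + 1 =>
      let Y := eulerGrid δ b σ B X0 n
      fun i => Y i + b (n * δ) Y i * δ
        + ∑ j, σ (n * δ) Y i j * (B ((n + 1 : ℕ) * δ) j - B (n * δ) j)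

/-- Continuously interpolated Euler approximation: for `t ∈ [τ_n, τ_{n+1}]`,
`Y(t) = Y(τ_n) + b(τ_n, Y(τ_n)) (t − τ_n) + σ(τ_n, Y(τ_n)) (B(t) − B(τ_n))`. -/
noncomputable def eulerY {d m : ℕ} (δ : ℝ)
    (b : ℝ → (Fin d → ℝ) → Fin d → ℝ)
    (σ : ℝ → (Fin d → ℝ) → Fin d → Fin m → ℝ)
    (B : ℝ → Fin m → ℝ) (X0 : Fin d → ℝ) (t : ℝ) : Fin d → ℝ :=
  let n := ⌊t / δ⌋₊
  let Y := eulerGrid δ b σ B X0 n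
  fun i => Y i + b (n * δ) Y i * (t - n * δ) + ∑ j, σ (n * δ) Y i j * (B t j - B (n * δ) j)

/-!
Write the grid increment `Y_k − Y_n` as the drift sum, the frozen diffusion term
`σ(τ_n, Y_n)(B(τ_k) − B(τ_n))` and a remainder `R(n,k)`. The remainder vanishes on single steps
and `R(n,k) − R(n,p) − R(p,k) = (σ(τ_p, Y_p) − σ(τ_n, Y_n))(B(τ_k) − B(τ_p))`. If `Y` is
`λ`-Hölder on `[τ_n, τ_p]`, this defect is `O(|τ_k − τ_n|^θ)` with `θ = min(λ, β) + λ > 1`, and the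
discrete sewing lemma gives `|R(n,k)| ≤ A |τ_k − τ_n|^θ`. On intervals of length at most `h`, where
`A h^{min(λ,β)} ≤ 1`, this is at most `|τ_k − τ_n|^λ`, which closes an induction on the length:
`Y` is `λ`-Hölder on short grid intervals with a constant independent of `δ`. Chaining windows of
length at least `h/2` on which this bound holds extends it to `[0, T]`; the interpolation inside a
cell is `λ`-Hölder as well, and a `λ`-Hölder path on `[0, T]` is bounded and `µ`-Hölder for
`µ < λ`.
-/

lemma vnorm_nonneg {n : ℕ} (y : Fin n → ℝ) : 0 ≤ vnorm y :=
  Finset.sum_nonneg fun _ _ => abs_nonneg _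

lemma vnorm_zero {n : ℕ} : vnorm (0 : Fin n → ℝ) = 0 := by
  simp [vnorm]

lemma vnorm_add_le {n : ℕ} (x y : Fin n → ℝ) :
    vnorm (fun i => x i + y i) ≤ vnorm x + vnorm y := by
  rw [vnorm, vnorm, vnorm, ← Finset.sum_add_distrib]
  exact Finset.sum_le_sum fun i _ => abs_add_le _ _

lemma vnorm_sub_le_sub_add_sub {n : ℕ} (x y z : Fin n → ℝ) :
    vnorm (fun i => x i - z i) ≤ vnorm (fun i => x i - y i) + vnorm (fun i => y i - z i) := by
  simpa only [sub_add_sub_cancel] using vnorm_add_le (fun i => x i - y i) (fun i => y i - z i)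

lemma vnorm_mul_const {n : ℕ} (x : Fin n → ℝ) (c : ℝ) :
    vnorm (fun i => x i * c) = vnorm x * |c| := by
  simp [vnorm, abs_mul, Finset.sum_mul]

lemma vnorm_sum_le {n : ℕ} {ι : Type*} (s : Finset ι) (f : ι → Fin n → ℝ) :
    vnorm (fun i => ∑ j ∈ s, f j i) ≤ ∑ j ∈ s, vnorm (f j) := by
  calc ∑ i, |∑ j ∈ s, f j i| ≤ ∑ i, ∑ j ∈ s, |f j i| :=
        Finset.sum_le_sum fun i _ => Finset.abs_sum_le_sum_abs _ _
    _ = ∑ j ∈ s, vnorm (f j) := Finset.sum_comm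

lemma mnorm_nonneg {d m : ℕ} (A : Fin d → Fin m → ℝ) : 0 ≤ mnorm A :=
  Finset.sum_nonneg fun _ _ => Finset.sum_nonneg fun _ _ => abs_nonneg _

lemma mnorm_add_le {d m : ℕ} (x y : Fin d → Fin m → ℝ) :
    mnorm (fun i j => x i j + y i j) ≤ mnorm x + mnorm y := by
  rw [mnorm, mnorm, mnorm, ← Finset.sum_add_distrib]
  refine Finset.sum_le_sum fun i _ => ?_
  rw [← Finset.sum_add_distrib]
  exact Finset.sum_le_sum fun j _ => abs_add_le _ _

lemma vnorm_mulVec_le {d m : ℕ} (A : Fin d → Fin m → ℝ) (v : Fin m → ℝ) :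
    vnorm (fun i => ∑ j, A i j * v j) ≤ mnorm A * vnorm v := by
  rw [vnorm, mnorm, Finset.sum_mul]
  refine Finset.sum_le_sum fun i _ => (Finset.abs_sum_le_sum_abs _ _).trans ?_
  rw [Finset.sum_mul]
  refine Finset.sum_le_sum fun j _ => ?_
  rw [abs_mul]
  exact mul_le_mul_of_nonneg_left
    (Finset.single_le_sum (f := fun j => |v j|) (fun _ _ => abs_nonneg _) (Finset.mem_univ j))
    (abs_nonneg _)

lemma rpow_le_rpow_sub_mul_rpow {x T a b : ℝ} (hx : 0 ≤ x) (hxT : x ≤ T) (hb : 0 < b)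
    (hba : b ≤ a) : x ^ a ≤ T ^ (a - b) * x ^ b := by
  rcases hx.eq_or_lt with rfl | hx
  · rw [Real.zero_rpow (by linarith), Real.zero_rpow hb.ne', mul_zero]
  calc x ^ a = x ^ (a - b) * x ^ b := by rw [← Real.rpow_add hx, sub_add_cancel]
    _ ≤ T ^ (a - b) * x ^ b := by gcongr

lemma self_le_rpow_sub_mul_rpow {x T lam : ℝ} (hx : 0 ≤ x) (hxT : x ≤ T) (hlam : 0 < lam)
    (hlam1 : lam ≤ 1) : x ≤ T ^ (1 - lam) * x ^ lam := by
  simpa only [Real.rpow_one] using rpow_le_rpow_sub_mul_rpow hx hxT hlam hlam1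

lemma div_mul_rpow_le {x y w T lam : ℝ} (hw : 0 < w) (hwx : w ≤ x) (hy : 0 ≤ y) (hyT : y ≤ T)
    (hlam : 0 < lam) (hlam1 : lam ≤ 1) :
    y / x * x ^ lam ≤ T ^ (1 - lam) * w ^ (lam - 1) * y ^ lam := by
  have hx : 0 < x := hw.trans_le hwx
  have hyT' := self_le_rpow_sub_mul_rpow hy hyT hlam hlam1
  calc y / x * x ^ lam = y * x ^ (lam - 1) := by rw [Real.rpow_sub_one hx.ne']; ring
    _ ≤ T ^ (1 - lam) * y ^ lam * w ^ (lam - 1) :=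
        mul_le_mul hyT' (Real.rpow_le_rpow_of_nonpos hw hwx (by linarith)) (by positivity)
          (hy.trans hyT')
    _ = T ^ (1 - lam) * w ^ (lam - 1) * y ^ lam := by ring

lemma rpow_add_rpow_le_of_le_mul {x y r θ : ℝ} (hx : 0 ≤ x) (hy : 0 ≤ y) (hr : 0 ≤ r)
    (hθ : 1 ≤ θ) (hxr : x ≤ r * (x + y)) (hyr : y ≤ r * (x + y)) :
    x ^ θ + y ^ θ ≤ r ^ (θ - 1) * (x + y) ^ θ := by
  have key : ∀ z, 0 ≤ z → z ≤ r * (x + y) → z ^ θ ≤ (r * (x + y)) ^ (θ - 1) * z := by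
    intro z hz hzr
    calc z ^ θ = z ^ (θ - 1) * z := by
          rw [← Real.rpow_add_one' hz (by linarith), sub_add_cancel]
      _ ≤ (r * (x + y)) ^ (θ - 1) * z := by gcongr
  calc x ^ θ + y ^ θ ≤ (r * (x + y)) ^ (θ - 1) * x + (r * (x + y)) ^ (θ - 1) * y :=
        add_le_add (key x hx hxr) (key y hy hyr)
    _ = r ^ (θ - 1) * (x + y) ^ θ := by
        rw [← mul_add, Real.mul_rpow hr (by positivity), mul_assoc,
          ← Real.rpow_add_one' (by positivity) (by linarith), sub_add_cancel]

lemma rpow_mul_rpow_le_rpow_min_add {x y z C a b : ℝ} (hx : 0 ≤ x) (hxy : x ≤ y) (hy : y ≤ 1)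
    (hz : 0 ≤ z) (hzy : z ≤ y) (hC : 0 ≤ C) (ha : 0 < a) (hb : 0 < b) :
    (C * x ^ a + x ^ b) * z ^ a ≤ (C + 1) * y ^ (min a b + a) := by
  have hγ : 0 ≤ min a b := le_min ha.le hb.le
  have hx1 : x ≤ 1 := hxy.trans hy
  have hy0 : 0 ≤ y := hx.trans hxy
  have hxa : x ^ a ≤ y ^ min a b :=
    (Real.rpow_le_rpow_of_exponent_ge' hx hx1 hγ (min_le_left a b)).trans
      (Real.rpow_le_rpow hx hxy hγ)
  have hxb : x ^ b ≤ y ^ min a b :=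
    (Real.rpow_le_rpow_of_exponent_ge' hx hx1 hγ (min_le_right a b)).trans
      (Real.rpow_le_rpow hx hxy hγ)
  calc (C * x ^ a + x ^ b) * z ^ a ≤ (C * y ^ min a b + y ^ min a b) * y ^ a := by gcongr
    _ = (C + 1) * y ^ (min a b + a) := by
        rw [Real.rpow_add' hy0 (by positivity)]; ring

lemma mul_rpow_add_le_rpow {A x h γ lam : ℝ} (hA : 0 ≤ A) (hx : 0 ≤ x) (hxh : x ≤ h)
    (hγ : 0 ≤ γ) (hγlam : γ + lam ≠ 0) (hAh : A * h ^ γ ≤ 1) :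
    A * x ^ (γ + lam) ≤ x ^ lam :=
  calc A * x ^ (γ + lam) = A * x ^ γ * x ^ lam := by rw [Real.rpow_add' hx hγlam]; ring
    _ ≤ 1 * x ^ lam := by
        gcongr
        exact (mul_le_mul_of_nonneg_left (Real.rpow_le_rpow hx hxh hγ) hA).trans hAh
    _ = x ^ lam := one_mul _

lemma exists_pos_le_one_mul_rpow_le_one {A γ : ℝ} (hA : 0 ≤ A) (hγ : 0 < γ) :
    ∃ h : ℝ, 0 < h ∧ h ≤ 1 ∧ A * h ^ γ ≤ 1 := by
  refine ⟨min 1 ((A + 1)⁻¹ ^ γ⁻¹), lt_min one_pos (by positivity), min_le_left _ _, ?_⟩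
  calc A * (min 1 ((A + 1)⁻¹ ^ γ⁻¹)) ^ γ ≤ A * ((A + 1)⁻¹ ^ γ⁻¹) ^ γ := by
        gcongr
        exact min_le_right _ _
    _ = A / (A + 1) := by
        rw [← Real.rpow_mul (by positivity), inv_mul_cancel₀ hγ.ne', Real.rpow_one, div_eq_mul_inv]
    _ ≤ 1 := (div_le_one (by linarith)).mpr (by linarith)

lemma one_lt_min_add {lam β : ℝ} (hlam : 1 / 2 < lam) (hβ : 1 - lam < β) :
    1 < min lam β + lam := by
  have := lt_min (by linarith : 1 - lam < lam) hβ
  linarith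

lemma natCast_mul_mem_Icc {δ T : ℝ} {N j : ℕ} (hδ : 0 ≤ δ) (hNδ : N * δ = T) (hj : j ≤ N) :
    (j : ℝ) * δ ∈ Set.Icc 0 T :=
  ⟨by positivity, hNδ ▸ by gcongr⟩

lemma natFloor_div_mul_le {t δ : ℝ} (ht : 0 ≤ t) (hδ : 0 < δ) : (⌊t / δ⌋₊ : ℝ) * δ ≤ t :=
  (le_div_iff₀ hδ).mp (Nat.floor_le (by positivity))

lemma lt_natFloor_div_add_one_mul (t : ℝ) {δ : ℝ} (hδ : 0 < δ) :
    t < ((⌊t / δ⌋₊ + 1 : ℕ) : ℝ) * δ := by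
  push_cast
  exact (div_lt_iff₀ hδ).mp (Nat.lt_floor_add_one _)

lemma exists_window_steps {h δ : ℝ} (hh : 0 < h) (hδ : 0 < δ) :
    ∃ j : ℕ, 0 < j ∧ h / 2 ≤ j * δ ∧ ∀ q ≤ j, q ≤ 1 ∨ q * δ ≤ h := by
  refine ⟨max 1 ⌊h / δ⌋₊, lt_max_of_lt_left one_pos, ?_, fun q hq => ?_⟩
  · have h₁ := lt_natFloor_div_add_one_mul h hδ
    have h₂ : ((⌊h / δ⌋₊ + 1 : ℕ) : ℝ) ≤ 2 * (max 1 ⌊h / δ⌋₊ : ℕ) := by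
      exact_mod_cast (by omega)
    nlinarith
  by_cases hfl : ⌊h / δ⌋₊ = 0
  · left; omega
  right
  calc (q : ℝ) * δ ≤ ⌊h / δ⌋₊ * δ := by gcongr; omega
    _ ≤ h := natFloor_div_mul_le hh.le hδ

/-- `1 / (1 − (2/3)^{θ−1})` sums the geometric series of splitting defects: bisecting an interval
of `q ≥ 2` steps leaves two pieces of at most `2q/3` steps. -/
noncomputable def sewingConst (θ c : ℝ) : ℝ := c / (1 - (2 / 3) ^ (θ - 1))

lemma sewingConst_nonneg {θ c : ℝ} (hθ : 1 < θ) (hc : 0 ≤ c) : 0 ≤ sewingConst θ c :=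
  div_nonneg hc (sub_nonneg.mpr (Real.rpow_le_one (by norm_num) (by norm_num) (by linarith)))

theorem le_sewingConst_mul_of_split {θ c : ℝ} (hθ : 1 < θ) (hc : 0 ≤ c) {R : ℕ → ℕ → ℝ}
    {n₀ k₀ : ℕ} (hR : ∀ n, n₀ ≤ n → n < k₀ → R n (n + 1) = 0)
    (hsplit : ∀ n p k, n₀ ≤ n → n < p → p < k → k ≤ k₀ →
      R n k ≤ R n p + R p k + c * ((k : ℝ) - n) ^ θ) :
    ∀ n k, n₀ ≤ n → n < k → k ≤ k₀ → R n k ≤ sewingConst θ c * ((k : ℝ) - n) ^ θ := by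
  set A := sewingConst θ c
  have hA : 0 ≤ A := sewingConst_nonneg hθ hc
  have hAρ : A * (2 / 3) ^ (θ - 1) + c = A := by
    have : (2 / 3 : ℝ) ^ (θ - 1) < 1 := Real.rpow_lt_one (by norm_num) (by norm_num) (by linarith)
    have hne : 1 - (2 / 3 : ℝ) ^ (θ - 1) ≠ 0 := by linarith
    simp only [A, sewingConst]
    field_simp
    ring
  intro n k hn hnk hk
  induction hq : k - n using Nat.strong_induction_on generalizing n k with
  | _ q ih =>
  obtain rfl | hnk2 : k = n + 1 ∨ n + 2 ≤ k := by omega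
  · rw [hR n hn hk]
    exact mul_nonneg hA (Real.rpow_nonneg (by push_cast; linarith) _)
  set p := (n + k) / 2
  have hRnp := ih (p - n) (by omega) n p hn (by omega) (by omega) rfl
  have hRpk := ih (k - p) (by omega) p k (by omega) (by omega) hk rfl
  have hpn : (3 : ℝ) * p ≤ 2 * k + n := by exact_mod_cast (by omega : 3 * p ≤ 2 * k + n)
  have hkp : (2 : ℝ) * n + k ≤ 3 * p := by exact_mod_cast (by omega : 2 * n + k ≤ 3 * p)
  have hhalves := rpow_add_rpow_le_of_le_mul (x := (p : ℝ) - n) (y := (k : ℝ) - p)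
    (r := 2 / 3) (by linarith) (by linarith) (by norm_num) hθ.le (by linarith) (by linarith)
  rw [sub_add_sub_cancel'] at hhalves
  calc R n k ≤ R n p + R p k + c * ((k : ℝ) - n) ^ θ := hsplit n p k hn (by omega) (by omega) hk
    _ ≤ A * (((p : ℝ) - n) ^ θ + ((k : ℝ) - p) ^ θ) + c * ((k : ℝ) - n) ^ θ := by
        rw [mul_add]; gcongr
    _ ≤ A * ((2 / 3) ^ (θ - 1) * ((k : ℝ) - n) ^ θ) + c * ((k : ℝ) - n) ^ θ := by gcongr
    _ = A * ((k : ℝ) - n) ^ θ := by linear_combination ((k : ℝ) - n) ^ θ * hAρ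

theorem le_add_div_mul_of_subadditive {D : ℕ → ℕ → ℝ} {f : ℕ → ℝ} (hf : Monotone f)
    (hf₀ : 0 ≤ f 0) {N j : ℕ} (hj : 0 < j)
    (hD : ∀ n p k, n ≤ p → p ≤ k → k ≤ N → D n k ≤ D n p + D p k)
    (hloc : ∀ n q, n + q ≤ N → q ≤ j → D n (n + q) ≤ f q) :
    ∀ n q, n + q ≤ N → D n (n + q) ≤ f q + q / j * f j := by
  have hfj : 0 ≤ f j := hf₀.trans (hf (Nat.zero_le j))
  intro n q hqN
  induction q using Nat.strong_induction_on generalizing n with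
  | _ q ih =>
  by_cases hqj : q ≤ j
  · have : 0 ≤ (q : ℝ) / j * f j := by positivity
    linarith [hloc n q hqN hqj]
  have hrest := ih (q - j) (by omega) (n + j) (by omega)
  rw [show n + j + (q - j) = n + q by omega] at hrest
  have hcast : ((q - j : ℕ) : ℝ) = q - j := Nat.cast_sub (by omega)
  calc D n (n + q) ≤ D n (n + j) + D (n + j) (n + q) := hD _ _ _ (by omega) (by omega) hqN
    _ ≤ f j + (f (q - j) + ((q - j : ℕ) : ℝ) / j * f j) :=
        add_le_add (hloc n j (by omega) le_rfl) hrest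
    _ = f (q - j) + q / j * f j := by
        rw [hcast]; field_simp; ring
    _ ≤ f q + q / j * f j := by gcongr; exact hf (Nat.sub_le q j)

lemma vnorm_le_and_holder_of_holder {n : ℕ} {f : ℝ → Fin n → ℝ} {T C lam μ : ℝ} (hT : 0 < T)
    (hC : 0 ≤ C) (hμ : 0 < μ) (hμlam : μ ≤ lam)
    (hf : ∀ r s : ℝ, 0 ≤ r → r < s → s ≤ T →
      vnorm (fun i => f s i - f r i) ≤ C * (s - r) ^ lam) :
    (∀ t ∈ Set.Icc 0 T, vnorm (f t) ≤ vnorm (f 0) + C * T ^ lam) ∧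
      ∀ r s : ℝ, 0 ≤ r → r < s → s ≤ T →
        vnorm (fun i => f s i - f r i) ≤ C * T ^ (lam - μ) * (s - r) ^ μ := by
  refine ⟨fun t ⟨ht0, htT⟩ => ?_, fun r s hr hrs hsT => ?_⟩
  · rcases ht0.eq_or_lt with rfl | ht0
    · have : 0 ≤ C * T ^ lam := by positivity
      linarith
    have htlam := Real.rpow_le_rpow ht0.le htT (by linarith : 0 ≤ lam)
    calc vnorm (f t) ≤ vnorm (fun i => f t i - f 0 i) + vnorm (f 0) := by
          simpa using vnorm_add_le (fun i => f t i - f 0 i) (f 0)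
      _ ≤ C * (t - 0) ^ lam + vnorm (f 0) := by gcongr; exact hf 0 t le_rfl ht0 htT
      _ ≤ vnorm (f 0) + C * T ^ lam := by rw [sub_zero, add_comm]; gcongr
  · calc vnorm (fun i => f s i - f r i) ≤ C * (s - r) ^ lam := hf r s hr hrs hsT
      _ ≤ C * (T ^ (lam - μ) * (s - r) ^ μ) := by
          gcongr
          exact rpow_le_rpow_sub_mul_rpow (by linarith) (by linarith) hμ hμlam
      _ = C * T ^ (lam - μ) * (s - r) ^ μ := by ring

structure EulerAssumptions {d m : ℕ} (T K M β lam : ℝ) (B : ℝ → Fin m → ℝ)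
    (b : ℝ → (Fin d → ℝ) → Fin d → ℝ) (σ : ℝ → (Fin d → ℝ) → Fin d → Fin m → ℝ) : Prop where
  holder_B : ∀ u ∈ Set.Icc (0:ℝ) T, ∀ v ∈ Set.Icc (0:ℝ) T,
    vnorm (fun j => B u j - B v j) ≤ K * |u - v| ^ lam
  bdd_b : ∀ t ∈ Set.Icc (0:ℝ) T, ∀ x : Fin d → ℝ, vnorm (b t x) ≤ M
  bdd_σ : ∀ t ∈ Set.Icc (0:ℝ) T, ∀ x : Fin d → ℝ, mnorm (σ t x) ≤ M
  lip_σ : ∀ t ∈ Set.Icc (0:ℝ) T, ∀ x y : Fin d → ℝ,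
    mnorm (fun i j => σ t x i j - σ t y i j) ≤ M * vnorm (fun i => x i - y i)
  holder_σ : ∀ s ∈ Set.Icc (0:ℝ) T, ∀ t ∈ Set.Icc (0:ℝ) T, ∀ x : Fin d → ℝ,
    mnorm (fun i j => σ t x i j - σ s x i j) ≤ M * |t - s| ^ β

noncomputable def eulerDrift {d m : ℕ} (δ : ℝ) (b : ℝ → (Fin d → ℝ) → Fin d → ℝ)
    (σ : ℝ → (Fin d → ℝ) → Fin d → Fin m → ℝ) (B : ℝ → Fin m → ℝ) (X0 : Fin d → ℝ)
    (n k : ℕ) : Fin d → ℝ :=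
  fun i => ∑ j ∈ Finset.Ico n k, b (j * δ) (eulerGrid δ b σ B X0 j) i * δ

/-- Only the diffusion term is frozen at `τ_n`: `b` has no regularity in time, so the drift is
kept as a Riemann sum. -/
noncomputable def eulerRemainder {d m : ℕ} (δ : ℝ) (b : ℝ → (Fin d → ℝ) → Fin d → ℝ)
    (σ : ℝ → (Fin d → ℝ) → Fin d → Fin m → ℝ) (B : ℝ → Fin m → ℝ) (X0 : Fin d → ℝ)
    (n k : ℕ) : Fin d → ℝ :=
  fun i => eulerGrid δ b σ B X0 k i - eulerGrid δ b σ B X0 n i - eulerDrift δ b σ B X0 n k i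
    - ∑ l, σ (n * δ) (eulerGrid δ b σ B X0 n) i l * (B (k * δ) l - B (n * δ) l)

noncomputable def eulerCell {d m : ℕ} (δ : ℝ) (b : ℝ → (Fin d → ℝ) → Fin d → ℝ)
    (σ : ℝ → (Fin d → ℝ) → Fin d → Fin m → ℝ) (B : ℝ → Fin m → ℝ) (X0 : Fin d → ℝ)
    (j : ℕ) (t : ℝ) : Fin d → ℝ :=
  fun i => eulerGrid δ b σ B X0 j i + b (j * δ) (eulerGrid δ b σ B X0 j) i * (t - j * δ)
    + ∑ l, σ (j * δ) (eulerGrid δ b σ B X0 j) i l * (B t l - B (j * δ) l)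

section Euler

variable {d m : ℕ} {T K M β lam δ : ℝ} {N : ℕ} {X0 : Fin d → ℝ} {B : ℝ → Fin m → ℝ}
  {b : ℝ → (Fin d → ℝ) → Fin d → ℝ} {σ : ℝ → (Fin d → ℝ) → Fin d → Fin m → ℝ}

lemma eulerRemainder_self (n : ℕ) : eulerRemainder δ b σ B X0 n n = 0 := by
  funext i
  simp [eulerRemainder, eulerDrift]

lemma eulerRemainder_succ (n : ℕ) : eulerRemainder δ b σ B X0 n (n + 1) = 0 := by
  funext i
  simp [eulerRemainder, eulerDrift, eulerGrid]
  ring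

lemma eulerRemainder_add {n p k : ℕ} (hnp : n ≤ p) (hpk : p ≤ k) (i : Fin d) :
    eulerRemainder δ b σ B X0 n k i
      = eulerRemainder δ b σ B X0 n p i + eulerRemainder δ b σ B X0 p k i
        + ∑ l, (σ (p * δ) (eulerGrid δ b σ B X0 p) i l - σ (n * δ) (eulerGrid δ b σ B X0 n) i l)
            * (B (k * δ) l - B (p * δ) l) := by
  simp only [eulerRemainder, eulerDrift, ← Finset.sum_Ico_consecutive _ hnp hpk, sub_mul,
    mul_sub, Finset.sum_sub_distrib]
  ring

lemma eulerGrid_sub_eq (n k : ℕ) (i : Fin d) :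
    eulerGrid δ b σ B X0 k i - eulerGrid δ b σ B X0 n i
      = eulerDrift δ b σ B X0 n k i + eulerRemainder δ b σ B X0 n k i
        + ∑ l, σ (n * δ) (eulerGrid δ b σ B X0 n) i l * (B (k * δ) l - B (n * δ) l) := by
  simp only [eulerRemainder]
  ring

lemma eulerY_eq_eulerCell (t : ℝ) :
    eulerY δ b σ B X0 t = eulerCell δ b σ B X0 ⌊t / δ⌋₊ t := rfl

lemma eulerY_zero : eulerY δ b σ B X0 0 = X0 := by
  funext i
  simp [eulerY, eulerGrid]

lemma eulerCell_natCast_mul (j : ℕ) :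
    eulerCell δ b σ B X0 j (j * δ) = eulerGrid δ b σ B X0 j := by
  funext i
  simp [eulerCell]

lemma eulerCell_succ_mul (j : ℕ) :
    eulerCell δ b σ B X0 j ((j + 1 : ℕ) * δ) = eulerGrid δ b σ B X0 (j + 1) := by
  funext i
  simp only [eulerCell, eulerGrid]
  push_cast
  ring

lemma eulerCell_sub (j : ℕ) (u v : ℝ) (i : Fin d) :
    eulerCell δ b σ B X0 j u i - eulerCell δ b σ B X0 j v i
      = b (j * δ) (eulerGrid δ b σ B X0 j) i * (u - v)
        + ∑ l, σ (j * δ) (eulerGrid δ b σ B X0 j) i l * (B u l - B v l) := by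
  simp only [eulerCell, mul_sub, Finset.sum_sub_distrib]
  ring

namespace EulerAssumptions

lemma mnorm_sub_le (hE : EulerAssumptions T K M β lam B b σ) {s t : ℝ}
    (hs : s ∈ Set.Icc 0 T) (ht : t ∈ Set.Icc 0 T) (x y : Fin d → ℝ) :
    mnorm (fun i l => σ t x i l - σ s y i l)
      ≤ M * vnorm (fun i => x i - y i) + M * |t - s| ^ β := by
  have hsplit := mnorm_add_le (fun i l => σ t x i l - σ t y i l) (fun i l => σ t y i l - σ s y i l)
  simp only [sub_add_sub_cancel] at hsplit
  exact hsplit.trans (add_le_add (hE.lip_σ t ht x y) (hE.holder_σ s hs t ht y))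

lemma vnorm_increment_le (hE : EulerAssumptions T K M β lam B b σ) {t : ℝ}
    (ht : t ∈ Set.Icc 0 T) (x : Fin d → ℝ) (c : ℝ) {u v : ℝ} (hu : u ∈ Set.Icc 0 T)
    (hv : v ∈ Set.Icc 0 T) :
    vnorm (fun i => b t x i * c + ∑ l, σ t x i l * (B u l - B v l))
      ≤ M * |c| + M * (K * |u - v| ^ lam) := by
  refine (vnorm_add_le _ _).trans (add_le_add ?_ ?_)
  · rw [vnorm_mul_const]
    exact mul_le_mul_of_nonneg_right (hE.bdd_b t ht x) (abs_nonneg c)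
  · exact (vnorm_mulVec_le _ _).trans (mul_le_mul (hE.bdd_σ t ht x) (hE.holder_B u hu v hv)
      (vnorm_nonneg _) ((mnorm_nonneg _).trans (hE.bdd_σ t ht x)))

lemma vnorm_eulerDrift_le (hE : EulerAssumptions T K M β lam B b σ) (hδ : 0 ≤ δ)
    (hNδ : N * δ = T) {n k : ℕ} (hnk : n ≤ k) (hkN : k ≤ N) :
    vnorm (eulerDrift δ b σ B X0 n k) ≤ M * (k * δ - n * δ) := by
  refine (vnorm_sum_le _ _).trans ?_
  calc ∑ j ∈ Finset.Ico n k, vnorm (fun i => b (j * δ) (eulerGrid δ b σ B X0 j) i * δ)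
      ≤ ∑ _j ∈ Finset.Ico n k, M * δ := by
        refine Finset.sum_le_sum fun j hj => ?_
        rw [vnorm_mul_const, abs_of_nonneg hδ]
        have hjN : j ≤ N := by have := (Finset.mem_Ico.mp hj).2; omega
        exact mul_le_mul_of_nonneg_right (hE.bdd_b _ (natCast_mul_mem_Icc hδ hNδ hjN) _) hδ
    _ = M * (k * δ - n * δ) := by
        rw [Finset.sum_const, Nat.card_Ico, nsmul_eq_mul, Nat.cast_sub hnk]
        ring

lemma vnorm_frozenDiffusion_le (hE : EulerAssumptions T K M β lam B b σ) (hδ : 0 ≤ δ)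
    (hNδ : N * δ = T) {n k : ℕ} (hnk : n ≤ k) (hkN : k ≤ N) :
    vnorm (fun i => ∑ l, σ (n * δ) (eulerGrid δ b σ B X0 n) i l * (B (k * δ) l - B (n * δ) l))
      ≤ M * (K * (k * δ - n * δ) ^ lam) := by
  have hn := natCast_mul_mem_Icc hδ hNδ (hnk.trans hkN)
  have hnk' : (n : ℝ) * δ ≤ k * δ := by gcongr
  simpa [abs_of_nonneg (sub_nonneg.mpr hnk')] using
    hE.vnorm_increment_le hn (eulerGrid δ b σ B X0 n) 0 (natCast_mul_mem_Icc hδ hNδ hkN) hn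

lemma vnorm_eulerGrid_sub_le_remainder (hE : EulerAssumptions T K M β lam B b σ)
    (hδ : 0 ≤ δ) (hNδ : N * δ = T) {n k : ℕ} (hnk : n ≤ k) (hkN : k ≤ N) :
    vnorm (fun i => eulerGrid δ b σ B X0 k i - eulerGrid δ b σ B X0 n i)
      ≤ M * (k * δ - n * δ) + vnorm (eulerRemainder δ b σ B X0 n k)
        + M * (K * (k * δ - n * δ) ^ lam) := by
  rw [funext (eulerGrid_sub_eq n k)]
  exact (vnorm_add_le _ _).trans (add_le_add ((vnorm_add_le _ _).trans
    (add_le_add (hE.vnorm_eulerDrift_le hδ hNδ hnk hkN) le_rfl))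
    (hE.vnorm_frozenDiffusion_le hδ hNδ hnk hkN))

lemma vnorm_eulerRemainder_le_add (hE : EulerAssumptions T K M β lam B b σ) (hδ : 0 ≤ δ)
    (hNδ : N * δ = T) {n p k : ℕ} (hnp : n ≤ p) (hpk : p ≤ k) (hkN : k ≤ N) :
    vnorm (eulerRemainder δ b σ B X0 n k)
      ≤ vnorm (eulerRemainder δ b σ B X0 n p) + vnorm (eulerRemainder δ b σ B X0 p k)
        + M * (vnorm (fun i => eulerGrid δ b σ B X0 p i - eulerGrid δ b σ B X0 n i)
            + (p * δ - n * δ) ^ β) * (K * (k * δ - p * δ) ^ lam) := by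
  have hn := natCast_mul_mem_Icc hδ hNδ (hnp.trans (hpk.trans hkN))
  have hp := natCast_mul_mem_Icc hδ hNδ (hpk.trans hkN)
  have hnp' : (n : ℝ) * δ ≤ p * δ := by gcongr
  have hpk' : (p : ℝ) * δ ≤ k * δ := by gcongr
  have hσ := hE.mnorm_sub_le hn hp (eulerGrid δ b σ B X0 p) (eulerGrid δ b σ B X0 n)
  have hB := hE.holder_B _ (natCast_mul_mem_Icc hδ hNδ hkN) _ hp
  rw [abs_of_nonneg (sub_nonneg.mpr hnp')] at hσ
  rw [abs_of_nonneg (sub_nonneg.mpr hpk')] at hB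
  rw [funext (eulerRemainder_add (δ := δ) (b := b) (σ := σ) (B := B) (X0 := X0) hnp hpk)]
  refine (vnorm_add_le _ _).trans (add_le_add (vnorm_add_le _ _) ?_)
  refine (vnorm_mulVec_le _ _).trans ?_
  rw [mul_add]
  exact mul_le_mul hσ hB (vnorm_nonneg _) ((mnorm_nonneg _).trans hσ)

lemma vnorm_eulerRemainder_le_add_rpow (hE : EulerAssumptions T K M β lam B b σ)
    (hK : 0 ≤ K) (hM : 0 ≤ M) (hlam : 0 < lam) (hβ : 0 < β) (hδ : 0 ≤ δ) (hNδ : N * δ = T)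
    {C : ℝ} (hC : 0 ≤ C) {n p k : ℕ} (hnp : n ≤ p) (hpk : p ≤ k) (hkN : k ≤ N)
    (hℓ : k * δ - n * δ ≤ 1)
    (hY : vnorm (fun i => eulerGrid δ b σ B X0 p i - eulerGrid δ b σ B X0 n i)
      ≤ C * (p * δ - n * δ) ^ lam) :
    vnorm (eulerRemainder δ b σ B X0 n k)
      ≤ vnorm (eulerRemainder δ b σ B X0 n p) + vnorm (eulerRemainder δ b σ B X0 p k)
        + M * K * (C + 1) * (k * δ - n * δ) ^ (min lam β + lam) := by
  have hnp' : (n : ℝ) * δ ≤ p * δ := by gcongr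
  have hpk' : (p : ℝ) * δ ≤ k * δ := by gcongr
  calc _ ≤ vnorm (eulerRemainder δ b σ B X0 n p) + vnorm (eulerRemainder δ b σ B X0 p k)
        + M * (vnorm (fun i => eulerGrid δ b σ B X0 p i - eulerGrid δ b σ B X0 n i)
            + (p * δ - n * δ) ^ β) * (K * (k * δ - p * δ) ^ lam) :=
        hE.vnorm_eulerRemainder_le_add hδ hNδ hnp hpk hkN
    _ ≤ vnorm (eulerRemainder δ b σ B X0 n p) + vnorm (eulerRemainder δ b σ B X0 p k)
        + M * (C * (p * δ - n * δ) ^ lam + (p * δ - n * δ) ^ β)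
          * (K * (k * δ - p * δ) ^ lam) := by gcongr
    _ = vnorm (eulerRemainder δ b σ B X0 n p) + vnorm (eulerRemainder δ b σ B X0 p k)
        + M * K * ((C * (p * δ - n * δ) ^ lam + (p * δ - n * δ) ^ β)
          * (k * δ - p * δ) ^ lam) := by ring
    _ ≤ vnorm (eulerRemainder δ b σ B X0 n p) + vnorm (eulerRemainder δ b σ B X0 p k)
        + M * K * ((C + 1) * (k * δ - n * δ) ^ (min lam β + lam)) := by
        gcongr _ + M * K * ?_
        exact rpow_mul_rpow_le_rpow_min_add (x := p * δ - n * δ) (z := k * δ - p * δ)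
          (by linarith) (by linarith) hℓ (by linarith) (by linarith) hC hlam hβ
    _ = _ := by ring

lemma vnorm_eulerRemainder_le (hE : EulerAssumptions T K M β lam B b σ) (hK : 0 ≤ K)
    (hM : 0 ≤ M) (hlam : 1 / 2 < lam) (hlam1 : lam ≤ 1) (hβ : 1 - lam < β) (hδ : 0 < δ)
    (hNδ : N * δ = T) {C : ℝ} (hC : 0 ≤ C) {n k : ℕ} (hnk : n < k) (hkN : k ≤ N)
    (hℓ : k * δ - n * δ ≤ 1)
    (hY : ∀ n' p, n ≤ n' → n' < p → p < k →
      vnorm (fun i => eulerGrid δ b σ B X0 p i - eulerGrid δ b σ B X0 n' i)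
        ≤ C * (p * δ - n' * δ) ^ lam) :
    vnorm (eulerRemainder δ b σ B X0 n k)
      ≤ sewingConst (min lam β + lam) (M * K * (C + 1)) * (k * δ - n * δ) ^ (min lam β + lam) := by
  set θ := min lam β + lam
  have hsplit : ∀ n' p k', n ≤ n' → n' < p → p < k' → k' ≤ k →
      vnorm (eulerRemainder δ b σ B X0 n' k')
        ≤ vnorm (eulerRemainder δ b σ B X0 n' p) + vnorm (eulerRemainder δ b σ B X0 p k')
          + M * K * (C + 1) * δ ^ θ * ((k' : ℝ) - n') ^ θ := by
    intro n' p k' hn' hn'p hpk' hk'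
    have hn'k' : (n' : ℝ) ≤ k' := by exact_mod_cast (hn'p.trans hpk').le
    have hℓ' : (k' : ℝ) * δ - n' * δ ≤ 1 :=
      (sub_le_sub (by gcongr) (by gcongr)).trans hℓ
    refine (hE.vnorm_eulerRemainder_le_add_rpow hK hM (by linarith) (by linarith) hδ.le hNδ hC
      hn'p.le hpk'.le (hk'.trans hkN) hℓ' (hY n' p hn' hn'p (hpk'.trans_le hk'))).trans_eq ?_
    rw [← sub_mul, Real.mul_rpow (by linarith) hδ.le]
    ring
  have hnk' : (n : ℝ) < k := by exact_mod_cast hnk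
  calc vnorm (eulerRemainder δ b σ B X0 n k)
      ≤ sewingConst θ (M * K * (C + 1) * δ ^ θ) * ((k : ℝ) - n) ^ θ :=
        le_sewingConst_mul_of_split (one_lt_min_add hlam hβ) (by positivity)
          (fun j _ _ => by rw [eulerRemainder_succ, vnorm_zero]) hsplit n k le_rfl hnk le_rfl
    _ = sewingConst θ (M * K * (C + 1)) * (k * δ - n * δ) ^ θ := by
        rw [← sub_mul, Real.mul_rpow (by linarith) hδ.le]
        simp only [sewingConst]
        ring

lemma vnorm_eulerGrid_sub_le_of_short (hE : EulerAssumptions T K M β lam B b σ) (hK : 0 ≤ K)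
    (hM : 0 ≤ M) (hlam : 1 / 2 < lam) (hlam1 : lam ≤ 1) (hβ : 1 - lam < β) (hδ : 0 < δ)
    (hδ1 : δ ≤ 1) (hNδ : N * δ = T) {h : ℝ} (hh1 : h ≤ 1)
    (hAh : sewingConst (min lam β + lam) (M * K * (M + M * K + 2)) * h ^ min lam β ≤ 1) :
    ∀ n k, n ≤ k → k ≤ N → (k ≤ n + 1 ∨ k * δ - n * δ ≤ h) →
      vnorm (fun i => eulerGrid δ b σ B X0 k i - eulerGrid δ b σ B X0 n i)
        ≤ (M + M * K + 1) * (k * δ - n * δ) ^ lam := by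
  intro n k hnk hkN hshort
  induction hq : k - n using Nat.strong_induction_on generalizing n k with
  | _ q ih =>
  set ℓ := (k : ℝ) * δ - n * δ
  have hℓ0 : 0 ≤ ℓ := sub_nonneg.mpr (by gcongr)
  have hℓ1 : ℓ ≤ 1 := by
    rcases hshort with hk | hℓh
    · have : (k : ℝ) ≤ n + 1 := by exact_mod_cast hk
      nlinarith
    · linarith
  have hR : vnorm (eulerRemainder δ b σ B X0 n k) ≤ ℓ ^ lam := by
    obtain rfl | rfl | hkn : k = n ∨ k = n + 1 ∨ n + 2 ≤ k := by omega
    · rw [eulerRemainder_self, vnorm_zero]; positivity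
    · rw [eulerRemainder_succ, vnorm_zero]; positivity
    have hℓh : ℓ ≤ h := hshort.resolve_left (by omega)
    have hsew := hE.vnorm_eulerRemainder_le (X0 := X0) hK hM hlam hlam1 hβ hδ hNδ
      (C := M + M * K + 1) (by positivity) (by omega) hkN hℓ1
      fun n' p hn' hn'p hpk => ih (p - n') (by omega) n' p hn'p.le (hpk.le.trans hkN)
        (Or.inr ((sub_le_sub (by gcongr) (by gcongr)).trans hℓh)) rfl
    rw [show M + M * K + 1 + 1 = M + M * K + 2 by ring] at hsew
    exact hsew.trans (mul_rpow_add_le_rpow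
      (sewingConst_nonneg (one_lt_min_add hlam hβ) (by positivity)) hℓ0 hℓh
      (le_min (by linarith) (by linarith)) (zero_lt_one.trans (one_lt_min_add hlam hβ)).ne' hAh)
  have hℓlam : ℓ ≤ ℓ ^ lam := Real.self_le_rpow_of_le_one hℓ0 hℓ1 hlam1
  calc vnorm (fun i => eulerGrid δ b σ B X0 k i - eulerGrid δ b σ B X0 n i)
      ≤ M * ℓ + vnorm (eulerRemainder δ b σ B X0 n k) + M * (K * ℓ ^ lam) :=
        hE.vnorm_eulerGrid_sub_le_remainder hδ.le hNδ hnk hkN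
    _ ≤ M * ℓ ^ lam + ℓ ^ lam + M * (K * ℓ ^ lam) := by gcongr
    _ = (M + M * K + 1) * ℓ ^ lam := by ring

lemma vnorm_eulerGrid_sub_le (hE : EulerAssumptions T K M β lam B b σ) (hK : 0 ≤ K)
    (hM : 0 ≤ M) (hlam : 1 / 2 < lam) (hlam1 : lam ≤ 1) (hβ : 1 - lam < β) (hδ : 0 < δ)
    (hδ1 : δ ≤ 1) (hNδ : N * δ = T) {h : ℝ} (hh0 : 0 < h) (hh1 : h ≤ 1)
    (hAh : sewingConst (min lam β + lam) (M * K * (M + M * K + 2)) * h ^ min lam β ≤ 1)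
    {n k : ℕ} (hnk : n ≤ k) (hkN : k ≤ N) :
    vnorm (fun i => eulerGrid δ b σ B X0 k i - eulerGrid δ b σ B X0 n i)
      ≤ (M + M * K + 1) * (1 + T ^ (1 - lam) * (h / 2) ^ (lam - 1)) * (k * δ - n * δ) ^ lam := by
  set CY := M + M * K + 1
  obtain ⟨j, hj, hjδ, hshort⟩ := exists_window_steps hh0 hδ
  have hgap : ∀ n q : ℕ, ((n + q : ℕ) : ℝ) * δ - n * δ = q * δ := fun n q => by push_cast; ring
  have hchain := le_add_div_mul_of_subadditive
    (D := fun n k => vnorm (fun i => eulerGrid δ b σ B X0 k i - eulerGrid δ b σ B X0 n i))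
    (f := fun q => CY * (q * δ) ^ lam) (fun q₁ q₂ hq => by dsimp only; gcongr)
    (by simp [CY, Real.zero_rpow (by linarith : lam ≠ 0)]) hj
    (fun n p k _ _ _ => (vnorm_sub_le_sub_add_sub _ _ _).trans_eq (add_comm _ _))
    (fun n q hqN hqj => by
      have := hE.vnorm_eulerGrid_sub_le_of_short (X0 := X0) hK hM hlam hlam1 hβ hδ hδ1 hNδ hh1
        hAh n (n + q) (by omega) hqN
        (by rw [hgap]; exact (hshort q hqj).imp (fun _ => by omega) id)
      rwa [hgap] at this)
  obtain ⟨q, rfl⟩ := Nat.exists_eq_add_of_le hnk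
  rw [hgap]
  have hqT : (q : ℝ) * δ ≤ T := hNδ ▸ by gcongr; exact_mod_cast (by omega : q ≤ N)
  have hchunks : (q : ℝ) / j * ((j : ℝ) * δ) ^ lam
      ≤ T ^ (1 - lam) * (h / 2) ^ (lam - 1) * (q * δ) ^ lam := by
    rw [← mul_div_mul_right (q : ℝ) j hδ.ne']
    exact div_mul_rpow_le (by positivity) hjδ (by positivity) hqT (by linarith) hlam1
  calc vnorm (fun i => eulerGrid δ b σ B X0 (n + q) i - eulerGrid δ b σ B X0 n i)
      ≤ CY * (q * δ) ^ lam + q / j * (CY * (j * δ) ^ lam) := hchain n q hkN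
    _ = CY * ((q * δ) ^ lam + q / j * (j * δ) ^ lam) := by ring
    _ ≤ CY * ((q * δ) ^ lam + T ^ (1 - lam) * (h / 2) ^ (lam - 1) * (q * δ) ^ lam) := by
        gcongr
    _ = CY * (1 + T ^ (1 - lam) * (h / 2) ^ (lam - 1)) * (q * δ) ^ lam := by ring

lemma vnorm_eulerCell_sub_le (hE : EulerAssumptions T K M β lam B b σ) (hM : 0 ≤ M)
    (hlam : 0 < lam) (hlam1 : lam ≤ 1) (hδ : 0 ≤ δ) (hNδ : N * δ = T) {j : ℕ} (hj : j ≤ N)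
    {u v : ℝ} (hu : u ∈ Set.Icc 0 T) (hv : v ∈ Set.Icc 0 T) :
    vnorm (fun i => eulerCell δ b σ B X0 j u i - eulerCell δ b σ B X0 j v i)
      ≤ (M * T ^ (1 - lam) + M * K) * |u - v| ^ lam := by
  have huv := self_le_rpow_sub_mul_rpow (abs_nonneg (u - v))
    (abs_sub_le_iff.mpr ⟨by linarith [hu.2, hv.1], by linarith [hu.1, hv.2]⟩) hlam hlam1
  rw [funext (eulerCell_sub j u v)]
  calc _ ≤ M * |u - v| + M * (K * |u - v| ^ lam) :=
        hE.vnorm_increment_le (natCast_mul_mem_Icc hδ hNδ hj) _ _ hu hv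
    _ ≤ M * (T ^ (1 - lam) * |u - v| ^ lam) + M * (K * |u - v| ^ lam) := by gcongr
    _ = (M * T ^ (1 - lam) + M * K) * |u - v| ^ lam := by ring

lemma vnorm_eulerY_sub_le (hE : EulerAssumptions T K M β lam B b σ) (hK : 0 ≤ K)
    (hM : 0 ≤ M) (hlam : 0 < lam) (hlam1 : lam ≤ 1) (hδ : 0 < δ) (hNδ : N * δ = T)
    {C : ℝ} (hC : 0 ≤ C)
    (hgrid : ∀ n k, n ≤ k → k ≤ N →
      vnorm (fun i => eulerGrid δ b σ B X0 k i - eulerGrid δ b σ B X0 n i)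
        ≤ C * (k * δ - n * δ) ^ lam)
    {r s : ℝ} (hr : 0 ≤ r) (hrs : r < s) (hsT : s ≤ T) :
    vnorm (fun i => eulerY δ b σ B X0 s i - eulerY δ b σ B X0 r i)
      ≤ (2 * (M * T ^ (1 - lam) + M * K) + C) * (s - r) ^ lam := by
  set a := M * T ^ (1 - lam) + M * K
  have ha : 0 ≤ a :=
    add_nonneg (mul_nonneg hM (Real.rpow_nonneg (by linarith) _)) (mul_nonneg hM hK)
  have hcell : ∀ j ≤ N, ∀ u ∈ Set.Icc 0 T, ∀ v ∈ Set.Icc 0 T, |u - v| ≤ s - r →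
      vnorm (fun i => eulerCell δ b σ B X0 j u i - eulerCell δ b σ B X0 j v i)
        ≤ a * (s - r) ^ lam := fun j hj u hu v hv huv =>
    (hE.vnorm_eulerCell_sub_le hM hlam hlam1 hδ.le hNδ hj hu hv).trans (by gcongr)
  have hrT : r ∈ Set.Icc 0 T := ⟨hr, by linarith⟩
  have hsT' : s ∈ Set.Icc 0 T := ⟨by linarith, hsT⟩
  have hrn := lt_natFloor_div_add_one_mul r hδ
  have hks := natFloor_div_mul_le (hr.trans hrs.le) hδ
  have hkN : ⌊s / δ⌋₊ ≤ N := Nat.floor_le_of_le (by rw [div_le_iff₀ hδ]; linarith)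
  have hnk : ⌊r / δ⌋₊ ≤ ⌊s / δ⌋₊ := Nat.floor_le_floor (div_le_div_of_nonneg_right hrs.le hδ.le)
  have hsr : 0 ≤ (s - r) ^ lam := Real.rpow_nonneg (by linarith) lam
  simp only [eulerY_eq_eulerCell]
  rcases hnk.eq_or_lt with hkn | hnk
  · rw [← hkn]
    calc _ ≤ a * (s - r) ^ lam :=
          hcell _ (hkn ▸ hkN) s hsT' r hrT (abs_sub_le_iff.mpr ⟨le_rfl, by linarith⟩)
      _ ≤ (2 * a + C) * (s - r) ^ lam := by nlinarith
  set n := ⌊r / δ⌋₊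
  set k := ⌊s / δ⌋₊
  have hn1k : ((n + 1 : ℕ) : ℝ) * δ ≤ k * δ := by gcongr; omega
  have hleft := hcell k hkN s hsT' (k * δ) (natCast_mul_mem_Icc hδ.le hNδ hkN)
    (abs_sub_le_iff.mpr ⟨by linarith, by linarith⟩)
  have hright := hcell n (hnk.le.trans hkN) ((n + 1 : ℕ) * δ)
    (natCast_mul_mem_Icc hδ.le hNδ (hnk.trans_le hkN)) r hrT
    (abs_sub_le_iff.mpr ⟨by linarith, by linarith⟩)
  rw [eulerCell_natCast_mul] at hleft
  rw [eulerCell_succ_mul] at hright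
  have hmid := (hgrid (n + 1) k hnk hkN).trans
    (by gcongr : C * (k * δ - ((n + 1 : ℕ) : ℝ) * δ) ^ lam ≤ C * (s - r) ^ lam)
  calc _ ≤ vnorm (fun i => eulerCell δ b σ B X0 k s i - eulerGrid δ b σ B X0 k i)
        + (vnorm (fun i => eulerGrid δ b σ B X0 k i - eulerGrid δ b σ B X0 (n + 1) i)
          + vnorm (fun i => eulerGrid δ b σ B X0 (n + 1) i - eulerCell δ b σ B X0 n r i)) :=
        (vnorm_sub_le_sub_add_sub _ _ _).trans
          (add_le_add_right (vnorm_sub_le_sub_add_sub _ _ _) _)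
    _ ≤ a * (s - r) ^ lam + (C * (s - r) ^ lam + a * (s - r) ^ lam) := by gcongr
    _ = (2 * a + C) * (s - r) ^ lam := by ring

theorem exists_eulerY_holder (hE : EulerAssumptions T K M β lam B b σ) (hT : 0 < T)
    (hK : 0 ≤ K) (hM : 0 ≤ M) (hlam : 1 / 2 < lam) (hlam1 : lam ≤ 1) (hβ : 1 - lam < β) :
    ∃ C, 0 ≤ C ∧ ∀ N : ℕ, 0 < N → T / N ≤ 1 → ∀ r s : ℝ, 0 ≤ r → r < s → s ≤ T →
      vnorm (fun i => eulerY (T / N) b σ B X0 s i - eulerY (T / N) b σ B X0 r i)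
        ≤ C * (s - r) ^ lam := by
  obtain ⟨h, hh0, hh1, hAh⟩ := exists_pos_le_one_mul_rpow_le_one
    (A := sewingConst (min lam β + lam) (M * K * (M + M * K + 2)))
    (sewingConst_nonneg (one_lt_min_add hlam hβ) (by positivity))
    (lt_min (by linarith) (by linarith) : 0 < min lam β)
  have hCg : 0 ≤ (M + M * K + 1) * (1 + T ^ (1 - lam) * (h / 2) ^ (lam - 1)) := by positivity
  refine ⟨2 * (M * T ^ (1 - lam) + M * K)
      + (M + M * K + 1) * (1 + T ^ (1 - lam) * (h / 2) ^ (lam - 1)),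
    by positivity, fun N hN hδ1 r s hr hrs hsT => ?_⟩
  have hδ : 0 < T / N := by positivity
  have hNδ : (N : ℝ) * (T / N) = T := by field_simp
  exact hE.vnorm_eulerY_sub_le hK hM (by linarith) hlam1 hδ hNδ hCg
    (fun n k hnk hkN =>
      hE.vnorm_eulerGrid_sub_le hK hM hlam hlam1 hβ hδ hδ1 hNδ hh0 hh1 hAh hnk hkN)
    hr hrs hsT

end EulerAssumptions

end Euler

theorem stmt_10_general (T : ℝ) (hT : 0 < T) (d m : ℕ)
    (lam K M β : ℝ) (hlam : 1 / 2 < lam) (hlam1 : lam < 1)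
    (hK : 0 < K) (hM : 0 < M) (hβ : 1 - lam < β)
    (X0 : Fin d → ℝ) (B : ℝ → Fin m → ℝ)
    (b : ℝ → (Fin d → ℝ) → Fin d → ℝ)
    (σ : ℝ → (Fin d → ℝ) → Fin d → Fin m → ℝ)
    (hB : ∀ u ∈ Set.Icc (0:ℝ) T, ∀ v ∈ Set.Icc (0:ℝ) T,
      vnorm (fun j => B u j - B v j) ≤ K * |u - v| ^ lam)
    (hbBdd : ∀ t ∈ Set.Icc (0:ℝ) T, ∀ x : Fin d → ℝ, vnorm (b t x) ≤ M)
    (hσBdd : ∀ t ∈ Set.Icc (0:ℝ) T, ∀ x : Fin d → ℝ, mnorm (σ t x) ≤ M)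
    (hσLip : ∀ t ∈ Set.Icc (0:ℝ) T, ∀ x y : Fin d → ℝ,
      mnorm (fun i j => σ t x i j - σ t y i j) ≤ M * vnorm (fun i => x i - y i))
    (hσHol : ∀ s ∈ Set.Icc (0:ℝ) T, ∀ t ∈ Set.Icc (0:ℝ) T, ∀ x : Fin d → ℝ,
      mnorm (fun i j => σ t x i j - σ s x i j) ≤ M * |t - s| ^ β) :
    ∀ μ : ℝ, 1 / 2 < μ → μ < lam →
      ∃ C : ℝ, 0 < C ∧
        ∀ N : ℕ, 0 < N → T / N ≤ 1 →
          (∀ t ∈ Set.Icc (0:ℝ) T, vnorm (eulerY (T / N) b σ B X0 t) ≤ C) ∧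
          (∀ r s : ℝ, 0 ≤ r → r < s → s ≤ T →
            vnorm (fun i => eulerY (T / N) b σ B X0 s i - eulerY (T / N) b σ B X0 r i)
              ≤ C * (s - r) ^ μ) := by
  intro μ hμ hμlam
  obtain ⟨C, hC, hholder⟩ := EulerAssumptions.exists_eulerY_holder (X0 := X0)
    ⟨hB, hbBdd, hσBdd, hσLip, hσHol⟩ hT hK.le hM.le hlam hlam1.le hβ
  have hX0 := vnorm_nonneg X0
  have hCT : 0 ≤ C * T ^ lam := by positivity
  have hCT' : 0 ≤ C * T ^ (lam - μ) := by positivity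
  refine ⟨vnorm X0 + C * T ^ lam + C * T ^ (lam - μ) + 1, by positivity, fun N hN hδ1 => ?_⟩
  obtain ⟨hbdd, hμholder⟩ :=
    vnorm_le_and_holder_of_holder hT hC (by linarith) hμlam.le (hholder N hN hδ1)
  rw [eulerY_zero] at hbdd
  refine ⟨fun t ht => (hbdd t ht).trans (by linarith),
    fun r s hr hrs hsT => (hμholder r s hr hrs hsT).trans ?_⟩
  gcongr
  linarith

/-- Theorem 1 (ii), pathwise form: if moreover the coefficients `b` and `σ` are bounded
(by `M`), then for every `µ ∈ (1/2, λ)` there is `C > 0` (independent of `N`) such that for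
every mesh `δ = T/N ≤ 1` the Euler approximation is bounded by `C` and is `µ`-Hölder on all
of `[0,T]` with constant `C`. -/
theorem stmt_10 (T : ℝ) (hT : 0 < T) (d m : ℕ) (hd : 1 ≤ d) (hm : 1 ≤ m)
    (lam K M β : ℝ) (hlam : 1 / 2 < lam) (hlam1 : lam < 1)
    (hK : 0 < K) (hM : 0 < M) (hβ : 1 - lam < β) (hβ1 : β ≤ 1)
    (X0 : Fin d → ℝ) (B : ℝ → Fin m → ℝ)
    (b : ℝ → (Fin d → ℝ) → Fin d → ℝ)
    (σ : ℝ → (Fin d → ℝ) → Fin d → Fin m → ℝ)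
    (hB : ∀ u ∈ Set.Icc (0:ℝ) T, ∀ v ∈ Set.Icc (0:ℝ) T,
      vnorm (fun j => B u j - B v j) ≤ K * |u - v| ^ lam)
    (hbBdd : ∀ t ∈ Set.Icc (0:ℝ) T, ∀ x : Fin d → ℝ, vnorm (b t x) ≤ M)
    (hσBdd : ∀ t ∈ Set.Icc (0:ℝ) T, ∀ x : Fin d → ℝ, mnorm (σ t x) ≤ M)
    (hσLip : ∀ t ∈ Set.Icc (0:ℝ) T, ∀ x y : Fin d → ℝ,
      mnorm (fun i j => σ t x i j - σ t y i j) ≤ M * vnorm (fun i => x i - y i))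
    (hσHol : ∀ s ∈ Set.Icc (0:ℝ) T, ∀ t ∈ Set.Icc (0:ℝ) T, ∀ x : Fin d → ℝ,
      mnorm (fun i j => σ t x i j - σ s x i j) ≤ M * |t - s| ^ β) :
    ∀ μ : ℝ, 1 / 2 < μ → μ < lam →
      ∃ C : ℝ, 0 < C ∧
        ∀ N : ℕ, 0 < N → T / N ≤ 1 →
          (∀ t ∈ Set.Icc (0:ℝ) T, vnorm (eulerY (T / N) b σ B X0 t) ≤ C) ∧
          (∀ r s : ℝ, 0 ≤ r → r < s → s ≤ T →
            vnorm (fun i => eulerY (T / N) b σ B X0 s i - eulerY (T / N) b σ B X0 r i)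
              ≤ C * (s - r) ^ μ) :=
  stmt_10_general T hT d m lam K M β hlam hlam1 hK hM hβ X0 B b σ hB hbBdd hσBdd hσLip hσHol
end

section
/- Let f : ℝ → ℝ satisfy, for some constant C > 0, the linear growth condition |f(x)| ≤ C(1+|x|) and the Lipschitz condition |f(x)−f(y)| ≤ C|x−y| for all x,y ∈ ℝ. Then there exists a constant C′ depending only on C such that for all α₁, α₂, x ∈ ℝ: |e^{α₁} f(e^{−α₁} x) − e^{α₂} f(e^{−α₂} x)| ≤ C′ (1 + e^{α₁} + e^{α₂} + |x|) |α₁ − α₂|. -/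
/-! Put `y = e^{-α₁} x` and `s = e^{α₂ - α₁}` with `α₂ ≤ α₁`. Then the difference equals
`e^{α₁} (f y - s f (y / s))`, and splitting `f y - s f (y / s) = (1 - s) f y + s (f y - f (y / s))`
bounds it by `C (1 - s) (1 + 2|y|)` using growth for the first summand and the Lipschitz bound
for the second. Finally `1 - s ≤ α₁ - α₂` since `1 - t ≤ e^{-t}`. -/

open Real

theorem abs_sub_mul_comp_div_le {f : ℝ → ℝ} {C s : ℝ}
    (hgrowth : ∀ x : ℝ, |f x| ≤ C * (1 + |x|))
    (hlip : ∀ x y : ℝ, |f x - f y| ≤ C * |x - y|)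
    (hs₀ : 0 < s) (hs₁ : s ≤ 1) (y : ℝ) :
    |f y - s * f (y / s)| ≤ C * (1 - s) * (1 + 2 * |y|) := by
  have hsplit : f y - s * f (y / s) = (1 - s) * f y + s * (f y - f (y / s)) := by ring
  have hscale : s * |y - y / s| = (1 - s) * |y| := by
    have : s * (y - y / s) = -((1 - s) * y) := by field_simp; ring
    calc s * |y - y / s| = |s * (y - y / s)| := by rw [abs_mul, abs_of_pos hs₀]
      _ = (1 - s) * |y| := by rw [this, abs_neg, abs_mul, abs_of_nonneg (sub_nonneg.2 hs₁)]
  calc |f y - s * f (y / s)|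
      ≤ (1 - s) * |f y| + s * |f y - f (y / s)| := by
        rw [hsplit]
        refine (abs_add_le _ _).trans_eq ?_
        rw [abs_mul, abs_mul, abs_of_nonneg (sub_nonneg.2 hs₁), abs_of_pos hs₀]
    _ ≤ (1 - s) * (C * (1 + |y|)) + s * (C * |y - y / s|) := by
        gcongr
        exacts [hgrowth y, hlip _ _]
    _ = C * (1 - s) * (1 + 2 * |y|) := by
        rw [mul_left_comm s, hscale]
        ring

theorem abs_exp_mul_comp_exp_neg_sub_le_of_le {f : ℝ → ℝ} {C : ℝ} (hC : 0 ≤ C)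
    (hgrowth : ∀ x : ℝ, |f x| ≤ C * (1 + |x|))
    (hlip : ∀ x y : ℝ, |f x - f y| ≤ C * |x - y|)
    {α₁ α₂ : ℝ} (h : α₂ ≤ α₁) (x : ℝ) :
    |exp α₁ * f (exp (-α₁) * x) - exp α₂ * f (exp (-α₂) * x)|
      ≤ C * (exp α₁ + 2 * |x|) * (α₁ - α₂) := by
  set y := exp (-α₁) * x
  set s := exp (α₂ - α₁)
  have hs₁ : s ≤ 1 := exp_le_one_iff.2 (by linarith)
  have hs : 1 - s ≤ α₁ - α₂ := by
    have := one_sub_le_exp_neg (α₁ - α₂)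
    rw [neg_sub] at this
    linarith
  have hfactor : exp α₁ * f y - exp α₂ * f (exp (-α₂) * x) = exp α₁ * (f y - s * f (y / s)) := by
    have hα₂ : exp α₂ = exp α₁ * s := by rw [← exp_add]; ring_nf
    have hy : y / s = exp (-α₂) * x := by
      rw [mul_div_right_comm, ← exp_sub]; ring_nf
    rw [hα₂, hy]
    ring
  have hy : exp α₁ * |y| = |x| := by
    rw [abs_mul, abs_of_pos (exp_pos _), ← mul_assoc, ← exp_add, add_neg_cancel, exp_zero,
      one_mul]
  calc |exp α₁ * f y - exp α₂ * f (exp (-α₂) * x)|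
      = exp α₁ * |f y - s * f (y / s)| := by
        rw [hfactor, abs_mul, abs_of_pos (exp_pos _)]
    _ ≤ exp α₁ * (C * (1 - s) * (1 + 2 * |y|)) := by
        gcongr
        exact abs_sub_mul_comp_div_le hgrowth hlip (exp_pos _) hs₁ y
    _ = C * (exp α₁ + 2 * |x|) * (1 - s) := by
        rw [← hy]
        ring
    _ ≤ C * (exp α₁ + 2 * |x|) * (α₁ - α₂) := by
        gcongr

theorem abs_exp_mul_comp_exp_neg_sub_le {f : ℝ → ℝ} {C : ℝ} (hC : 0 ≤ C)
    (hgrowth : ∀ x : ℝ, |f x| ≤ C * (1 + |x|))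
    (hlip : ∀ x y : ℝ, |f x - f y| ≤ C * |x - y|) (α₁ α₂ x : ℝ) :
    |exp α₁ * f (exp (-α₁) * x) - exp α₂ * f (exp (-α₂) * x)|
      ≤ C * (exp α₁ + exp α₂ + 2 * |x|) * |α₁ - α₂| := by
  wlog h : α₂ ≤ α₁ generalizing α₁ α₂
  · rw [abs_sub_comm, abs_sub_comm α₁, add_comm (exp α₁)]
    exact this α₂ α₁ (le_of_not_ge h)
  rw [abs_of_nonneg (sub_nonneg.2 h)]
  refine (abs_exp_mul_comp_exp_neg_sub_le_of_le hC hgrowth hlip h x).trans ?_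
  gcongr
  linarith [exp_pos α₂]

/-- Lemma 3: if `f` has linear growth and is Lipschitz (both with constant `C`), then there is
`C′ = C′(C)` with `|e^{α₁} f(e^{−α₁}x) − e^{α₂} f(e^{−α₂}x)| ≤ C′(1+e^{α₁}+e^{α₂}+|x|)|α₁−α₂|`. -/
theorem stmt_12 (f : ℝ → ℝ) (C : ℝ) (hC : 0 < C)
    (hgrowth : ∀ x : ℝ, |f x| ≤ C * (1 + |x|))
    (hlip : ∀ x y : ℝ, |f x - f y| ≤ C * |x - y|) :
    ∃ C' : ℝ, 0 < C' ∧ ∀ α₁ α₂ x : ℝ,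
      |Real.exp α₁ * f (Real.exp (-α₁) * x) - Real.exp α₂ * f (Real.exp (-α₂) * x)|
        ≤ C' * (1 + Real.exp α₁ + Real.exp α₂ + |x|) * |α₁ - α₂| := by
  refine ⟨2 * C, by positivity, fun α₁ α₂ x => ?_⟩
  have hsum : exp α₁ + exp α₂ + 2 * |x| ≤ 2 * (1 + exp α₁ + exp α₂ + |x|) := by
    linarith [exp_pos α₁, exp_pos α₂]
  calc |exp α₁ * f (exp (-α₁) * x) - exp α₂ * f (exp (-α₂) * x)|
      ≤ C * (exp α₁ + exp α₂ + 2 * |x|) * |α₁ - α₂| :=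
        abs_exp_mul_comp_exp_neg_sub_le hC.le hgrowth hlip α₁ α₂ x
    _ ≤ C * (2 * (1 + exp α₁ + exp α₂ + |x|)) * |α₁ - α₂| := by gcongr
    _ = 2 * C * (1 + exp α₁ + exp α₂ + |x|) * |α₁ - α₂| := by ring
end

section
/- Let ξ₁ and ξ₂ be centered jointly Gaussian real random variables on a probability space (i.e., the law of the random vector (ξ₁,ξ₂) on ℝ² is a centered Gaussian measure), let q ≥ 1, and set L = max(E[ξ₁²], E[ξ₂²]). Then there exists a constant C depending only on L and q such that E[|e^{ξ₁} − e^{ξ₂}|^{2q}] ≤ C (E[(ξ₁ − ξ₂)²])^q. -/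
/-!
Pointwise, `|e^a - e^b| ≤ |a - b| (e^a + e^b)`. By Cauchy–Schwarz the `2q`-th moment of the
right-hand side is at most `√(E|ξ₁ - ξ₂|^{4q}) · √(E(e^{ξ₁} + e^{ξ₂})^{4q})`. The first factor is
`(E(ξ₁ - ξ₂)²)^q` times an absolute moment of the standard Gaussian, by scaling; the second
is bounded through the Gaussian moment generating function
`E e^{tξᵢ} = e^{t² E ξᵢ² / 2} ≤ e^{t² L / 2}`.
-/

open MeasureTheory ProbabilityTheory NNReal Real

lemma Real.abs_exp_sub_exp_le (a b : ℝ) : |exp a - exp b| ≤ |a - b| * (exp a + exp b) := by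
  wlog hba : b ≤ a generalizing a b
  · simpa only [abs_sub_comm, add_comm] using this b a (le_of_not_ge hba)
  have hexp : exp a * exp (b - a) = exp b := by rw [← exp_add, add_sub_cancel]
  have hdiff : exp a - exp b ≤ (a - b) * exp a := by
    nlinarith [add_one_le_exp (b - a), exp_pos a]
  rw [abs_of_nonneg (sub_nonneg.2 (exp_le_exp.2 hba)), abs_of_nonneg (sub_nonneg.2 hba)]
  nlinarith [exp_pos b]

lemma Real.add_rpow_le_two_rpow_mul_rpow_add_rpow {a b p : ℝ} (ha : 0 ≤ a) (hb : 0 ≤ b)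
    (hp : 0 ≤ p) : (a + b) ^ p ≤ 2 ^ p * (a ^ p + b ^ p) := by
  wlog hba : b ≤ a generalizing a b
  · simpa only [add_comm] using this hb ha (le_of_not_ge hba)
  calc (a + b) ^ p ≤ (2 * a) ^ p := by gcongr; linarith
    _ = 2 ^ p * a ^ p := mul_rpow zero_le_two ha
    _ ≤ 2 ^ p * (a ^ p + b ^ p) := by gcongr; exact le_add_of_nonneg_right (rpow_nonneg hb p)

lemma Real.exp_add_exp_rpow_le (a b : ℝ) {p : ℝ} (hp : 0 ≤ p) :
    (exp a + exp b) ^ p ≤ 2 ^ p * (exp (p * a) + exp (p * b)) := by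
  simpa only [← exp_mul, mul_comm] using
    add_rpow_le_two_rpow_mul_rpow_add_rpow (exp_pos a).le (exp_pos b).le hp

lemma gaussianReal_zero_eq_map_sqrt_mul (v : ℝ≥0) :
    gaussianReal 0 v = (gaussianReal 0 1).map (√v * ·) := by
  rw [gaussianReal_map_const_mul, mul_zero, mul_one]
  congr
  ext
  simp

section CauchySchwarz

variable {Ω : Type*} [MeasurableSpace Ω] {μ : Measure Ω} {f g : Ω → ℝ} {r : ℝ}

lemma memLp_two_rpow (hf : 0 ≤ f) (hfm : AEMeasurable f μ)
    (hf2 : Integrable (fun ω ↦ f ω ^ (2 * r)) μ) : MemLp (fun ω ↦ f ω ^ r) 2 μ := by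
  rw [memLp_two_iff_integrable_sq (hfm.pow_const r).aestronglyMeasurable]
  simpa only [← Real.rpow_two, ← rpow_mul (hf _), mul_comm r] using hf2

lemma integral_rpow_mul_rpow_le (hf : 0 ≤ f) (hg : 0 ≤ g)
    (hfm : AEMeasurable f μ) (hgm : AEMeasurable g μ)
    (hf2 : Integrable (fun ω ↦ f ω ^ (2 * r)) μ) (hg2 : Integrable (fun ω ↦ g ω ^ (2 * r)) μ) :
    ∫ ω, f ω ^ r * g ω ^ r ∂μ ≤ √(∫ ω, f ω ^ (2 * r) ∂μ) * √(∫ ω, g ω ^ (2 * r) ∂μ) := by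
  have hsq : ∀ x : ℝ, 0 ≤ x → (x ^ r) ^ (2 : ℝ) = x ^ (2 * r) := fun x hx ↦ by
    rw [← rpow_mul hx, mul_comm]
  have := integral_mul_le_Lp_mul_Lq_of_nonneg HolderConjugate.two_two
    (ae_of_all _ fun ω ↦ rpow_nonneg (hf ω) r) (ae_of_all _ fun ω ↦ rpow_nonneg (hg ω) r)
    (ENNReal.ofReal_ofNat 2 ▸ memLp_two_rpow hf hfm hf2)
    (ENNReal.ofReal_ofNat 2 ▸ memLp_two_rpow hg hgm hg2)
  simpa only [hsq _ (hf _), hsq _ (hg _), Real.sqrt_eq_rpow, one_div] using this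

end CauchySchwarz

namespace ProbabilityTheory.HasLaw

variable {Ω : Type*} [MeasurableSpace Ω] {μ : Measure Ω} {X : Ω → ℝ} {m : ℝ} {v : ℝ≥0}

lemma integral_sq_of_gaussianReal (hX : HasLaw X (gaussianReal 0 v) μ) :
    ∫ ω, X ω ^ 2 ∂μ = v := by
  rw [← Function.comp_def (· ^ 2) X, hX.integral_comp (by fun_prop),
    ← variance_fun_id_gaussianReal (μ := 0), variance_eq_integral measurable_id'.aemeasurable,
    integral_id_gaussianReal]
  simp_rw [sub_zero]

lemma integral_exp_mul_of_gaussianReal (hX : HasLaw X (gaussianReal m v) μ) (t : ℝ) :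
    ∫ ω, exp (t * X ω) ∂μ = exp (m * t + v * t ^ 2 / 2) :=
  mgf_gaussianReal hX.map_eq t

lemma integrable_exp_mul_of_gaussianReal (hX : HasLaw X (gaussianReal m v) μ) (t : ℝ) :
    Integrable (fun ω ↦ exp (t * X ω)) μ := by
  have := hX.isProbabilityMeasure
  rw [← mgf_pos_iff, mgf_gaussianReal hX.map_eq]
  exact exp_pos _

lemma integrable_abs_rpow_of_gaussianReal (hX : HasLaw X (gaussianReal m v) μ) {p : ℝ}
    (hp : 0 ≤ p) : Integrable (fun ω ↦ |X ω| ^ p) μ := by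
  have := hX.isProbabilityMeasure
  have hmem : MemLp X (ENNReal.ofReal p) μ :=
    (memLp_map_measure_iff aestronglyMeasurable_id hX.aemeasurable).1
      (hX.map_eq ▸ memLp_id_gaussianReal' _ ENNReal.ofReal_ne_top)
  simpa [ENNReal.toReal_ofReal hp] using hmem.integrable_norm_rpow'

lemma integral_abs_rpow_of_gaussianReal (hX : HasLaw X (gaussianReal 0 v) μ) (p : ℝ) :
    ∫ ω, |X ω| ^ p ∂μ = (v : ℝ) ^ (p / 2) * ∫ x, |x| ^ p ∂gaussianReal 0 1 := by
  have habs_rpow : Measurable fun x : ℝ ↦ |x| ^ p := measurable_id.abs.pow_const p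
  rw [← Function.comp_def (fun x : ℝ ↦ |x| ^ p) X, hX.integral_comp habs_rpow.aestronglyMeasurable,
    gaussianReal_zero_eq_map_sqrt_mul, integral_map (by fun_prop) habs_rpow.aestronglyMeasurable,
    ← integral_const_mul]
  congr 1 with x
  rw [abs_mul, mul_rpow (abs_nonneg _) (abs_nonneg _), abs_of_nonneg (Real.sqrt_nonneg _),
    Real.sqrt_eq_rpow, ← rpow_mul v.coe_nonneg, one_div_mul_eq_div]

end ProbabilityTheory.HasLaw

section ExpOfGaussian

variable {Ω : Type*} [MeasurableSpace Ω] {μ : Measure Ω} {ξ₁ ξ₂ : Ω → ℝ} {v₁ v₂ v : ℝ≥0}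
  {m₁ m₂ L p q : ℝ}

lemma integrable_exp_add_exp_rpow_of_gaussianReal (h₁ : HasLaw ξ₁ (gaussianReal m₁ v₁) μ)
    (h₂ : HasLaw ξ₂ (gaussianReal m₂ v₂) μ) (hp : 0 ≤ p) :
    Integrable (fun ω ↦ (exp (ξ₁ ω) + exp (ξ₂ ω)) ^ p) μ := by
  refine Integrable.mono' (((h₁.integrable_exp_mul_of_gaussianReal p).add
    (h₂.integrable_exp_mul_of_gaussianReal p)).const_mul (2 ^ p)) ?_
    (ae_of_all _ fun ω ↦ ?_)
  · have := h₁.aemeasurable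
    have := h₂.aemeasurable
    fun_prop
  · rw [norm_of_nonneg (by positivity)]
    exact exp_add_exp_rpow_le _ _ hp

lemma integral_exp_add_exp_rpow_le (h₁ : HasLaw ξ₁ (gaussianReal 0 v₁) μ)
    (h₂ : HasLaw ξ₂ (gaussianReal 0 v₂) μ) (hv₁ : (v₁ : ℝ) ≤ L) (hv₂ : (v₂ : ℝ) ≤ L)
    (hp : 0 ≤ p) :
    ∫ ω, (exp (ξ₁ ω) + exp (ξ₂ ω)) ^ p ∂μ ≤ 2 ^ (p + 1) * exp (L * p ^ 2 / 2) := by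
  have hi₁ := h₁.integrable_exp_mul_of_gaussianReal p
  have hi₂ := h₂.integrable_exp_mul_of_gaussianReal p
  calc ∫ ω, (exp (ξ₁ ω) + exp (ξ₂ ω)) ^ p ∂μ
      ≤ ∫ ω, 2 ^ p * (exp (p * ξ₁ ω) + exp (p * ξ₂ ω)) ∂μ :=
        integral_mono (integrable_exp_add_exp_rpow_of_gaussianReal h₁ h₂ hp)
          ((hi₁.add hi₂).const_mul _) fun ω ↦ exp_add_exp_rpow_le _ _ hp
    _ = 2 ^ p * (exp (v₁ * p ^ 2 / 2) + exp (v₂ * p ^ 2 / 2)) := by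
        rw [integral_const_mul, integral_add hi₁ hi₂, h₁.integral_exp_mul_of_gaussianReal,
          h₂.integral_exp_mul_of_gaussianReal, zero_mul, zero_add, zero_add]
    _ ≤ 2 ^ p * (exp (L * p ^ 2 / 2) + exp (L * p ^ 2 / 2)) := by gcongr
    _ = 2 ^ (p + 1) * exp (L * p ^ 2 / 2) := by rw [Real.rpow_add_one two_ne_zero]; ring

noncomputable def expDiffMomentConst (L q : ℝ) : ℝ :=
  √((∫ x, |x| ^ (4 * q) ∂gaussianReal 0 1) * (2 ^ (4 * q + 1) * exp (L * (4 * q) ^ 2 / 2)))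

theorem integral_abs_exp_sub_exp_rpow_le (hq : 0 ≤ q)
    (h₁ : HasLaw ξ₁ (gaussianReal 0 v₁) μ) (h₂ : HasLaw ξ₂ (gaussianReal 0 v₂) μ)
    (h : HasLaw (fun ω ↦ ξ₁ ω - ξ₂ ω) (gaussianReal 0 v) μ)
    (hv₁ : (v₁ : ℝ) ≤ L) (hv₂ : (v₂ : ℝ) ≤ L) :
    ∫ ω, |exp (ξ₁ ω) - exp (ξ₂ ω)| ^ (2 * q) ∂μ ≤ expDiffMomentConst L q * (v : ℝ) ^ q := by
  have hm₁ := h₁.aemeasurable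
  have hm₂ := h₂.aemeasurable
  have h4q : 2 * (2 * q) = 4 * q := by ring
  have hη := h.integrable_abs_rpow_of_gaussianReal (p := 4 * q) (by positivity)
  have hexp := integrable_exp_add_exp_rpow_of_gaussianReal h₁ h₂ (p := 4 * q) (by positivity)
  rw [← h4q] at hη hexp
  calc ∫ ω, |exp (ξ₁ ω) - exp (ξ₂ ω)| ^ (2 * q) ∂μ
      ≤ ∫ ω, |ξ₁ ω - ξ₂ ω| ^ (2 * q) * (exp (ξ₁ ω) + exp (ξ₂ ω)) ^ (2 * q) ∂μ := by
        refine integral_mono_of_nonneg (ae_of_all _ fun ω ↦ by positivity)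
          ((memLp_two_rpow (fun _ ↦ abs_nonneg _) (by fun_prop) hη).integrable_mul
            (memLp_two_rpow (fun _ ↦ by positivity) (by fun_prop) hexp))
          (ae_of_all _ fun ω ↦ ?_)
        dsimp only
        rw [← mul_rpow (abs_nonneg _) (by positivity)]
        exact rpow_le_rpow (abs_nonneg _) (abs_exp_sub_exp_le _ _) (by positivity)
    _ ≤ √(∫ ω, |ξ₁ ω - ξ₂ ω| ^ (4 * q) ∂μ) * √(∫ ω, (exp (ξ₁ ω) + exp (ξ₂ ω)) ^ (4 * q) ∂μ) := by
        simpa only [h4q] using integral_rpow_mul_rpow_le (fun _ ↦ abs_nonneg _)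
          (fun _ ↦ by positivity) (by fun_prop) (by fun_prop) hη hexp
    _ ≤ √((v : ℝ) ^ (4 * q / 2) * ∫ x, |x| ^ (4 * q) ∂gaussianReal 0 1) *
          √(2 ^ (4 * q + 1) * exp (L * (4 * q) ^ 2 / 2)) := by
        rw [h.integral_abs_rpow_of_gaussianReal]
        gcongr
        exact integral_exp_add_exp_rpow_le h₁ h₂ hv₁ hv₂ (by positivity)
    _ = expDiffMomentConst L q * (v : ℝ) ^ q := by
        rw [← sqrt_mul' _ (by positivity), mul_assoc, sqrt_mul (by positivity),
          Real.sqrt_eq_rpow, ← rpow_mul v.coe_nonneg, expDiffMomentConst, mul_comm]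
        ring_nf

end ExpOfGaussian

theorem stmt_13_general {Ω : Type*} [MeasurableSpace Ω] (μ : Measure Ω)
    (L q : ℝ) (hq : 1 ≤ q) :
    ∃ C : ℝ, 0 < C ∧
      ∀ ξ₁ ξ₂ : Ω → ℝ, Measurable ξ₁ → Measurable ξ₂ →
        (∀ a b : ℝ, ∃ v : ℝ≥0,
          Measure.map (fun ω => a * ξ₁ ω + b * ξ₂ ω) μ = gaussianReal 0 v) →
        max (∫ ω, (ξ₁ ω) ^ 2 ∂μ) (∫ ω, (ξ₂ ω) ^ 2 ∂μ) = L →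
        (∫ ω, |Real.exp (ξ₁ ω) - Real.exp (ξ₂ ω)| ^ (2 * q) ∂μ)
          ≤ C * (∫ ω, (ξ₁ ω - ξ₂ ω) ^ 2 ∂μ) ^ q := by
  refine ⟨expDiffMomentConst L q + 1, add_pos_of_nonneg_of_pos (sqrt_nonneg _) one_pos,
    fun ξ₁ ξ₂ hm₁ hm₂ hlin hmax ↦ ?_⟩
  have hlaw : ∀ a b : ℝ, ∃ v : ℝ≥0,
      HasLaw (fun ω ↦ a * ξ₁ ω + b * ξ₂ ω) (gaussianReal 0 v) μ :=
    fun a b ↦ (hlin a b).imp fun _ hv ↦ ⟨by fun_prop, hv⟩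
  obtain ⟨v₁, h₁⟩ := hlaw 1 0
  obtain ⟨v₂, h₂⟩ := hlaw 0 1
  obtain ⟨v, h⟩ := hlaw 1 (-1)
  simp only [one_mul, zero_mul, add_zero, zero_add, neg_one_mul, ← sub_eq_add_neg] at h₁ h₂ h
  have hv₁ : (v₁ : ℝ) ≤ L := by
    rw [← h₁.integral_sq_of_gaussianReal, ← hmax]; exact le_max_left _ _
  have hv₂ : (v₂ : ℝ) ≤ L := by
    rw [← h₂.integral_sq_of_gaussianReal, ← hmax]; exact le_max_right _ _
  rw [h.integral_sq_of_gaussianReal]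
  calc _ ≤ expDiffMomentConst L q * (v : ℝ) ^ q :=
        integral_abs_exp_sub_exp_rpow_le (by linarith) h₁ h₂ h hv₁ hv₂
    _ ≤ (expDiffMomentConst L q + 1) * (v : ℝ) ^ q := by gcongr; linarith

/-- Lemma 4: if `ξ₁, ξ₂` are centered jointly Gaussian (every linear combination
`a ξ₁ + b ξ₂` has a centered Gaussian law) with `L = max(E ξ₁², E ξ₂²)`, and `q ≥ 1`,
then `E|e^{ξ₁} − e^{ξ₂}|^{2q} ≤ C(L,q) (E(ξ₁ − ξ₂)²)^q`. -/
theorem stmt_13 {Ω : Type*} [MeasurableSpace Ω] (μ : Measure Ω) [IsProbabilityMeasure μ]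
    (L q : ℝ) (hL : 0 ≤ L) (hq : 1 ≤ q) :
    ∃ C : ℝ, 0 < C ∧
      ∀ ξ₁ ξ₂ : Ω → ℝ, Measurable ξ₁ → Measurable ξ₂ →
        (∀ a b : ℝ, ∃ v : ℝ≥0,
          Measure.map (fun ω => a * ξ₁ ω + b * ξ₂ ω) μ = gaussianReal 0 v) →
        max (∫ ω, (ξ₁ ω) ^ 2 ∂μ) (∫ ω, (ξ₂ ω) ^ 2 ∂μ) = L →
        (∫ ω, |Real.exp (ξ₁ ω) - Real.exp (ξ₂ ω)| ^ (2 * q) ∂μ)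
          ≤ C * (∫ ω, (ξ₁ ω - ξ₂ ω) ^ 2 ∂μ) ^ q :=
  stmt_13_general μ L q hq
end
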